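/- arXiv:1510.04658 — 10 statements merged into one kernel-verified Lean document; each statement's English description precedes it below -/
import Mathlib

section
/- Let M ∈ ℝ^{n×n} be symmetric with at least two distinct eigenvalues, let λ₁ be its largest eigenvalue, X₁ = {v : Mv = λ₁v} its eigenspace, and δ₁ = min{|λ₁ − λ| : λ an eigenvalue of M, λ ≠ λ₁}. Let x be a unit vector with μ = xᵀMx and ε = ‖Mx − μx‖₂, and assume |μ − λ₁| < |μ − λ| for every eigenvalue λ ≠ λ₁ of M. Then there exists a unit vector v ∈ X₁ with ‖x − v‖₂ ≤ √8 · ε/δ₁. -/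
/-!
Expand `x` in an orthonormal eigenbasis of `M` and let `w` be the part of the expansion along
eigenvectors for `λ₁`. Every other coordinate `cᵢ` belongs to an eigenvalue `λᵢ` with
`δ₁ ≤ |λ₁ - λᵢ| ≤ |λ₁ - μ| + |μ - λᵢ| < 2 |μ - λᵢ|`, and `Mx - μx` has coordinates
`(λᵢ - μ) cᵢ`, so `(δ₁ / 2) ‖x - w‖ ≤ ε`. Finally, if `p` is the orthogonal projection of `x`
onto the eigenspace and `v` the unit vector in the direction of `p` (any unit eigenvector if
`p = 0`), then `‖x - v‖² = 2 - 2‖p‖ ≤ 2 (1 - ‖p‖²) = 2 ‖x - p‖² ≤ 2 ‖x - w‖²`.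
-/

open Matrix

noncomputable def enorm2 {ι : Type*} [Fintype ι] (x : ι → ℝ) : ℝ :=
  Real.sqrt (∑ i, x i ^ 2)

def matSpectrum {n : ℕ} (M : Matrix (Fin n) (Fin n) ℝ) : Set ℝ :=
  {lam : ℝ | ∃ w : Fin n → ℝ, w ≠ 0 ∧ M.mulVec w = lam • w}

open Module End
open scoped RealInnerProductSpace

section InnerProductSpace

variable {E : Type*} [NormedAddCommGroup E] [InnerProductSpace ℝ E]

theorem LinearMap.IsSymmetric.exists_mem_eigenspace_mul_norm_sub_le [FiniteDimensional ℝ E]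
    {T : E →ₗ[ℝ] E} (hT : T.IsSymmetric) {lam₁ μ c : ℝ} (hc : 0 ≤ c)
    (hgap : ∀ lam, HasEigenvalue T lam → lam ≠ lam₁ → c ≤ |lam - μ|) (x : E) :
    ∃ w ∈ eigenspace T lam₁, c * ‖x - w‖ ≤ ‖T x - μ • x‖ := by
  set b := hT.eigenvectorBasis rfl
  set lam := hT.eigenvalues rfl
  have hTb : ∀ i y, ⟪b i, T y⟫ = lam i * ⟪b i, y⟫ := fun i y => by
    rw [← hT, hT.apply_eigenvectorBasis, real_inner_smul_left]
    rfl
  set a : Fin (finrank ℝ E) → ℝ := fun i => if lam i = lam₁ then ⟪b i, x⟫ else 0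
  refine ⟨∑ i, a i • b i, ?_, ?_⟩
  · refine Submodule.sum_mem _ fun i _ => ?_
    by_cases hi : lam i = lam₁
    · exact Submodule.smul_mem _ _ (mem_eigenspace_iff.2 (hi ▸ hT.apply_eigenvectorBasis rfl i))
    · simp [a, hi]
  have hres : ∀ i, ⟪b i, T x - μ • x⟫ = (lam i - μ) * ⟪b i, x⟫ := fun i => by
    rw [inner_sub_right, real_inner_smul_right, hTb]; ring
  have hproj : ∀ i, ⟪b i, x - ∑ j, a j • b j⟫ = if lam i = lam₁ then 0 else ⟪b i, x⟫ :=
      fun i => by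
    rw [inner_sub_right, b.orthonormal.inner_right_fintype]
    split_ifs with hi <;> simp [a, hi]
  rw [← pow_le_pow_iff_left₀ (by positivity) (norm_nonneg _) two_ne_zero, mul_pow,
    ← b.sum_sq_inner_right, ← b.sum_sq_inner_right, Finset.mul_sum]
  refine Finset.sum_le_sum fun i _ => ?_
  rw [hproj, hres]
  split_ifs with hi
  · rw [zero_pow two_ne_zero, mul_zero]
    positivity
  · rw [mul_pow, ← sq_abs (lam i - μ)]
    gcongr
    exact hgap _ (hT.hasEigenvalue_eigenvalues rfl i) hi

theorem Submodule.exists_mem_norm_eq_one_inner_eq_norm {K : Submodule ℝ E} (hK : K ≠ ⊥)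
    {p : E} (hp : p ∈ K) : ∃ v ∈ K, ‖v‖ = 1 ∧ ⟪p, v⟫ = ‖p‖ := by
  rcases eq_or_ne p 0 with rfl | hp0
  · obtain ⟨u, huK, hu0⟩ := Submodule.exists_mem_ne_zero_of_ne_bot hK
    exact ⟨‖u‖⁻¹ • u, K.smul_mem _ huK, norm_smul_inv_norm hu0, by simp⟩
  · refine ⟨‖p‖⁻¹ • p, K.smul_mem _ hp, norm_smul_inv_norm hp0, ?_⟩
    rw [real_inner_smul_right, real_inner_self_eq_norm_sq]
    field_simp

theorem Submodule.exists_mem_norm_eq_one_norm_sub_le_sqrt_two_mul {K : Submodule ℝ E}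
    [K.HasOrthogonalProjection] (hK : K ≠ ⊥) {x w : E} (hx : ‖x‖ = 1) (hw : w ∈ K) :
    ∃ v ∈ K, ‖v‖ = 1 ∧ ‖x - v‖ ≤ √2 * ‖x - w‖ := by
  set p := K.starProjection x
  obtain ⟨v, hvK, hv, hpv⟩ :=
    exists_mem_norm_eq_one_inner_eq_norm hK (K.starProjection_apply_mem x)
  refine ⟨v, hvK, hv, ?_⟩
  have hxv : ⟪x, v⟫ = ‖p‖ := by
    rw [← hpv, ← sub_eq_zero, ← inner_sub_left]
    exact K.starProjection_inner_eq_zero x v hvK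
  have hpyth : ‖x‖ ^ 2 = ‖p‖ ^ 2 + ‖x - p‖ ^ 2 := by
    rw [← add_sub_cancel p x, norm_add_sq_real, add_sub_cancel_left, real_inner_comm,
      K.starProjection_inner_eq_zero x p (K.starProjection_apply_mem x)]
    ring
  have hmin : ‖x - p‖ ≤ ‖x - w‖ := by
    rw [starProjection_minimal]
    exact ciInf_le ⟨0, Set.forall_mem_range.2 fun _ => norm_nonneg _⟩ (⟨w, hw⟩ : K)
  rw [← pow_le_pow_iff_left₀ (norm_nonneg _) (by positivity) two_ne_zero, mul_pow,
    Real.sq_sqrt zero_le_two, norm_sub_sq_real, hxv, hv, hx]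
  nlinarith [norm_nonneg p, norm_nonneg (x - p), pow_le_pow_left₀ (norm_nonneg _) hmin 2]

end InnerProductSpace

theorem enorm2_eq_norm {ι : Type*} [Fintype ι] (x : ι → ℝ) :
    enorm2 x = ‖(WithLp.toLp 2 x : EuclideanSpace ℝ ι)‖ := by
  simp [enorm2, EuclideanSpace.norm_eq]

theorem mem_matSpectrum_iff_hasEigenvalue {n : ℕ} {M : Matrix (Fin n) (Fin n) ℝ} {lam : ℝ} :
    lam ∈ matSpectrum M ↔ HasEigenvalue M.toEuclideanLin lam := by
  constructor
  · rintro ⟨w, hw0, hw⟩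
    refine hasEigenvalue_of_hasEigenvector (x := WithLp.toLp 2 w) ⟨?_, by simpa using hw0⟩
    simpa [mem_eigenspace_iff] using congrArg (WithLp.toLp 2) hw
  · intro h
    obtain ⟨v, hvK, hv0⟩ := h.exists_hasEigenvector
    exact ⟨v.ofLp, by simpa using hv0,
      by simpa using congrArg WithLp.ofLp (mem_eigenspace_iff.1 hvK)⟩

theorem half_le_abs_sub_of_le_abs_sub_of_abs_sub_lt {δ a b m : ℝ} (hδ : δ ≤ |a - b|)
    (h : |m - a| < |m - b|) : δ / 2 ≤ |b - m| := by
  have := abs_sub_le a m b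
  rw [abs_sub_comm a m] at this
  rw [abs_sub_comm b m]
  linarith

theorem single_eigenvector_error_bound_general
    {n : ℕ} (M : Matrix (Fin n) (Fin n) ℝ) (hM : M.IsSymm)
    (lam1 : ℝ) (hlam1 : IsGreatest (matSpectrum M) lam1)
    (δ1 : ℝ)
    (hδ1 : IsLeast {r : ℝ | ∃ lam ∈ matSpectrum M, lam ≠ lam1 ∧ r = |lam1 - lam|} δ1)
    (x : Fin n → ℝ) (hx : enorm2 x = 1)
    (μ : ℝ)
    (ε : ℝ) (hε : ε = enorm2 (M.mulVec x - μ • x))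
    (hgap : ∀ lam ∈ matSpectrum M, lam ≠ lam1 → |μ - lam1| < |μ - lam|) :
    ∃ v : Fin n → ℝ, M.mulVec v = lam1 • v ∧ enorm2 v = 1 ∧
      enorm2 (x - v) ≤ Real.sqrt 8 * ε / δ1 := by
  have hT : M.toEuclideanLin.IsSymmetric :=
    Matrix.isSymmetric_toEuclideanLin_iff.2 (Matrix.isHermitian_iff_isSymm.2 hM)
  have hδ1_pos : 0 < δ1 := by
    obtain ⟨lam, -, hne, rfl⟩ := hδ1.1
    exact abs_pos.2 (sub_ne_zero.2 hne.symm)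
  have hhalf_gap : ∀ lam, HasEigenvalue M.toEuclideanLin lam → lam ≠ lam1 →
      δ1 / 2 ≤ |lam - μ| := fun lam hlam hne =>
    have hlam' := mem_matSpectrum_iff_hasEigenvalue.2 hlam
    half_le_abs_sub_of_le_abs_sub_of_abs_sub_lt (hδ1.2 ⟨lam, hlam', hne, rfl⟩) (hgap lam hlam' hne)
  obtain ⟨w, hwK, hw⟩ :=
    hT.exists_mem_eigenspace_mul_norm_sub_le (half_pos hδ1_pos).le hhalf_gap (WithLp.toLp 2 x)
  obtain ⟨v, hvK, hv, hxv⟩ := Submodule.exists_mem_norm_eq_one_norm_sub_le_sqrt_two_mul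
    (mem_matSpectrum_iff_hasEigenvalue.1 hlam1.1) ((enorm2_eq_norm x).symm.trans hx) hwK
  refine ⟨v.ofLp, ?_, by rw [enorm2_eq_norm]; exact hv, ?_⟩
  · simpa using congrArg WithLp.ofLp (mem_eigenspace_iff.1 hvK)
  · have hε' : ε = ‖M.toEuclideanLin (WithLp.toLp 2 x) - μ • WithLp.toLp 2 x‖ := by
      rw [hε, enorm2_eq_norm]; rfl
    have hsqrt8 : √8 = √2 * 2 := by
      rw [show (8 : ℝ) = 2 * 2 ^ 2 by norm_num, Real.sqrt_mul zero_le_two,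
        Real.sqrt_sq zero_le_two]
    rw [enorm2_eq_norm, hsqrt8, mul_assoc, mul_div_assoc]
    refine hxv.trans (mul_le_mul_of_nonneg_left ?_ (Real.sqrt_nonneg 2))
    rw [le_div_iff₀ hδ1_pos]
    linarith

/-- For symmetric `M` with at least two distinct eigenvalues,
largest eigenvalue `λ₁` with eigengap `δ₁`, and a unit vector `x` whose
Rayleigh quotient `μ` is strictly closer to `λ₁` than to any other eigenvalue,
there exists a unit eigenvector `v` for `λ₁` with `‖x − v‖₂ ≤ √8 ε / δ₁`. -/
theorem single_eigenvector_error_bound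
    {n : ℕ} (M : Matrix (Fin n) (Fin n) ℝ) (hM : M.IsSymm)
    (lam1 : ℝ) (hlam1 : IsGreatest (matSpectrum M) lam1)
    (htwo : ∃ lam ∈ matSpectrum M, lam ≠ lam1)
    (δ1 : ℝ)
    (hδ1 : IsLeast {r : ℝ | ∃ lam ∈ matSpectrum M, lam ≠ lam1 ∧ r = |lam1 - lam|} δ1)
    (x : Fin n → ℝ) (hx : enorm2 x = 1)
    (μ : ℝ) (hμ : μ = x ⬝ᵥ M.mulVec x)
    (ε : ℝ) (hε : ε = enorm2 (M.mulVec x - μ • x))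
    (hgap : ∀ lam ∈ matSpectrum M, lam ≠ lam1 → |μ - lam1| < |μ - lam|) :
    ∃ v : Fin n → ℝ, M.mulVec v = lam1 • v ∧ enorm2 v = 1 ∧
      enorm2 (x - v) ≤ Real.sqrt 8 * ε / δ1 :=
  single_eigenvector_error_bound_general M hM lam1 hlam1 δ1 hδ1 x hx μ ε hε hgap
end

section
/- Let M ∈ ℝ^{n×n} be symmetric with eigenvalues λ₁ ≥ ⋯ ≥ λ_n, let 1 ≤ p ≤ q ≤ n, and let x be a unit vector with μ = xᵀMx ∈ [λ_q, λ_p]. Define δ_{p,q}(μ) = min{|λ_k − μ| : k < p or k > q} (which equals min(μ − λ_{q+1}, λ_{p−1} − μ) when both exterior eigenvalues exist) and let X_p^q be the direct sum of the eigenspaces of λ_p, λ_{p+1}, …, λ_q. If the eigenresidual ε = ‖Mx − μx‖₂ satisfies ε ≤ δ_{p,q}(μ), then there exists a unit vector v ∈ X_p^q with ‖x − v‖₂ ≤ √2 · ε/δ_{p,q}(μ). -/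
open Matrix

/-!
Expand `x` in the orthonormal eigenbasis `vᵢ`, `x = ∑ cᵢ vᵢ`. The residual `Mx - μx` has
coordinates `(λᵢ - μ) cᵢ`, and `|λᵢ - μ| ≥ δ` for every `i` whose eigenvalue lies outside
`[λ_q, λ_p]`, so the part of `x` along those eigenvectors has norm at most `ε / δ`. If `y` is the
orthogonal projection of `x` onto the remaining eigenvectors, `w = y / ‖y‖` satisfies
`‖x - w‖² = 2 - 2‖y‖ ≤ 2 (1 - ‖y‖²) = 2 ‖x - y‖²`.
-/

open RealInnerProductSpace

section

variable {E : Type*} [NormedAddCommGroup E] [InnerProductSpace ℝ E]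

theorem Submodule.exists_norm_eq_one_norm_sub_le (K : Submodule ℝ E) [K.HasOrthogonalProjection]
    (hK : K ≠ ⊥) {x y : E} (hx : ‖x‖ = 1) (hy : y ∈ K) :
    ∃ w ∈ K, ‖w‖ = 1 ∧ ‖x - w‖ ≤ √2 * ‖x - y‖ := by
  set P := K.starProjection x
  have hPK : P ∈ K := K.starProjection_apply_mem x
  have hPy : ‖x - P‖ ≤ ‖x - y‖ :=
    (K.starProjection_minimal x).trans_le
      (ciInf_le (f := fun z : K => ‖x - z‖) ⟨0, Set.forall_mem_range.2 fun _ => norm_nonneg _⟩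
        ⟨y, hy⟩)
  have hinner : ∀ z ∈ K, ⟪x, z⟫ = ⟪P, z⟫ := fun z hz => by
    rw [← sub_eq_zero, ← inner_sub_left]
    exact K.starProjection_inner_eq_zero x z hz
  have hdist : ‖x - P‖ ^ 2 = 1 - ‖P‖ ^ 2 := by
    rw [norm_sub_sq_real, hx, hinner P hPK, real_inner_self_eq_norm_sq]
    ring
  suffices ∃ w ∈ K, ‖w‖ = 1 ∧ ‖x - w‖ ^ 2 ≤ 2 * ‖x - P‖ ^ 2 by
    obtain ⟨w, hwK, hw, hle⟩ := this
    refine ⟨w, hwK, hw, le_trans ?_ (mul_le_mul_of_nonneg_left hPy (Real.sqrt_nonneg 2))⟩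
    rw [← Real.sqrt_sq (norm_nonneg (x - P)), ← Real.sqrt_mul zero_le_two]
    exact Real.le_sqrt_of_sq_le hle
  have hunit : ∀ z : E, z ≠ 0 → ‖‖z‖⁻¹ • z‖ = 1 := fun z hz => by
    rw [norm_smul, norm_inv, norm_norm, inv_mul_cancel₀ (norm_ne_zero_iff.2 hz)]
  rcases eq_or_ne P 0 with hP | hP
  · -- `x ⟂ K`, so every unit vector of `K` is at distance `√2` from `x`.
    obtain ⟨z, hzK, hz⟩ := Submodule.exists_mem_ne_zero_of_ne_bot hK
    have hzK' : ‖z‖⁻¹ • z ∈ K := K.smul_mem _ hzK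
    refine ⟨‖z‖⁻¹ • z, hzK', hunit z hz, ?_⟩
    rw [norm_sub_sq_real, hx, hinner _ hzK', hP, inner_zero_left, hunit z hz, sub_zero, hx]
    norm_num
  · have hPK' : ‖P‖⁻¹ • P ∈ K := K.smul_mem _ hPK
    have hP1 : ‖P‖ ≤ 1 := by nlinarith [norm_nonneg P, sq_nonneg ‖x - P‖]
    refine ⟨‖P‖⁻¹ • P, hPK', hunit P hP, ?_⟩
    rw [norm_sub_sq_real, hx, hinner _ hPK', real_inner_smul_right, real_inner_self_eq_norm_sq,
      hunit P hP, hdist, show ‖P‖⁻¹ * ‖P‖ ^ 2 = ‖P‖ by field_simp]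
    nlinarith [norm_nonneg P]

namespace OrthonormalBasis

variable {ι : Type*} [Fintype ι] (b : OrthonormalBasis ι ℝ E)

theorem norm_le_norm_of_forall_abs_repr_le {u r : E} (h : ∀ i, |b.repr u i| ≤ |b.repr r i|) :
    ‖u‖ ≤ ‖r‖ := by
  rw [← b.repr.norm_map u, ← b.repr.norm_map r, EuclideanSpace.norm_eq, EuclideanSpace.norm_eq]
  gcongr with i
  simpa only [Real.norm_eq_abs] using h i

theorem mem_of_forall_notMem_repr_eq_zero {s : Finset ι} {K : Submodule ℝ E}
    (hK : ∀ i ∈ s, b i ∈ K) {x : E} (hx : ∀ i ∉ s, b.repr x i = 0) : x ∈ K := by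
  rw [← b.sum_repr x]
  refine K.sum_mem fun i _ => ?_
  by_cases hi : i ∈ s
  · exact K.smul_mem _ (hK i hi)
  · rw [hx i hi, zero_smul]
    exact K.zero_mem

theorem repr_apply_sub_smul_of_apply_eq_smul {A : E →ₗ[ℝ] E} {lam : ι → ℝ}
    (hA : ∀ i, A (b i) = lam i • b i) (μ : ℝ) (x : E) (i : ι) :
    b.repr (A x - μ • x) i = (lam i - μ) * b.repr x i := by
  have hexp : A x - μ • x = ∑ j, ((lam j - μ) * b.repr x j) • b j := by
    conv_lhs => rw [← b.sum_repr x]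
    simp only [map_sum, map_smul, hA, Finset.smul_sum, ← Finset.sum_sub_distrib, smul_smul,
      ← sub_smul]
    refine Finset.sum_congr rfl fun j _ => ?_
    ring_nf
  have hsymm := b.sum_repr_symm (WithLp.toLp 2 fun j => (lam j - μ) * b.repr x j)
  simp only at hsymm
  rw [hexp, hsymm, LinearIsometryEquiv.apply_symm_apply]

theorem exists_norm_eq_one_norm_sub_le_of_norm_residual_le {A : E →ₗ[ℝ] E} {lam : ι → ℝ}
    (hA : ∀ i, A (b i) = lam i • b i) {s : Finset ι} (hs : s.Nonempty) {K : Submodule ℝ E}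
    (hK : ∀ i ∈ s, b i ∈ K) {μ δ ε : ℝ} (hgap : ∀ i ∉ s, δ ≤ |lam i - μ|)
    (hne : ∀ i ∉ s, lam i ≠ μ) {x : E} (hx : ‖x‖ = 1) (hε : ‖A x - μ • x‖ ≤ ε) (hεδ : ε ≤ δ) :
    ∃ w ∈ K, ‖w‖ = 1 ∧ ‖x - w‖ ≤ √2 * ε / δ := by
  classical
  have hres := b.repr_apply_sub_smul_of_apply_eq_smul hA μ x
  rcases (((norm_nonneg _).trans hε).trans hεδ).eq_or_lt with rfl | hδ
  · -- Here `√2 * ε / δ = 0`, so `w = x` is forced; `ε ≤ δ = 0` gives `A x = μ x`.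
    have hAx : A x - μ • x = 0 := norm_le_zero_iff.mp (hε.trans hεδ)
    refine ⟨x, b.mem_of_forall_notMem_repr_eq_zero hK fun i hi => ?_, hx, by simp⟩
    have := hres i
    rw [hAx, map_zero, WithLp.ofLp_zero, Pi.zero_apply, eq_comm, mul_eq_zero] at this
    exact this.resolve_left (sub_ne_zero.mpr (hne i hi))
  have := Module.Finite.of_basis b.toBasis
  obtain ⟨j, hj⟩ := hs
  have hKne : K ≠ ⊥ := fun h => b.orthonormal.ne_zero j (by simpa [h] using hK j hj)
  set y := b.repr.symm (WithLp.toLp 2 fun i => if i ∈ s then b.repr x i else 0)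
  have hyK : y ∈ K := b.mem_of_forall_notMem_repr_eq_zero hK fun i hi => by simp [y, hi]
  obtain ⟨w, hwK, hw, hxw⟩ := K.exists_norm_eq_one_norm_sub_le hKne hx hyK
  refine ⟨w, hwK, hw, hxw.trans ?_⟩
  rw [mul_div_assoc]
  gcongr
  rw [le_div_iff₀' hδ, ← abs_of_pos hδ, ← Real.norm_eq_abs, ← norm_smul]
  refine (b.norm_le_norm_of_forall_abs_repr_le fun i => ?_).trans hε
  by_cases hi : i ∈ s
  · simp [y, hi]
  · rw [hres, abs_mul]
    simpa [y, hi, abs_mul, abs_of_pos hδ] using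
      mul_le_mul_of_nonneg_right (hgap i hi) (abs_nonneg (b.repr x i))

end OrthonormalBasis

end

theorem Module.End.mem_iSup_eigenspace_Icc {R V ι : Type*} [CommRing R] [PartialOrder R]
    [AddCommGroup V] [Module R V] [LinearOrder ι] [LocallyFiniteOrder ι] {f : Module.End R V}
    {lam : ι → R} (hlam : Antitone lam) {p q : ι} (hpq : p ≤ q) {i : ι}
    (hi : lam q ≤ lam i ∧ lam i ≤ lam p) {u : V} (hu : f u = lam i • u) :
    u ∈ ⨆ j ∈ Finset.Icc p q, f.eigenspace (lam j) := by
  have key : ∀ j ∈ Finset.Icc p q, lam i = lam j →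
      u ∈ ⨆ j ∈ Finset.Icc p q, f.eigenspace (lam j) :=
    fun j hj hij => Submodule.mem_iSup_of_mem j <| Submodule.mem_iSup_of_mem hj <| by
      rw [Module.End.mem_eigenspace_iff, hu, hij]
  rcases lt_or_ge i p with hip | hpi
  · exact key p (Finset.mem_Icc.2 ⟨le_rfl, hpq⟩) (le_antisymm hi.2 (hlam hip.le))
  rcases le_or_gt i q with hiq | hqi
  · exact key i (Finset.mem_Icc.2 ⟨hpi, hiq⟩) rfl
  · exact key q (Finset.mem_Icc.2 ⟨hpq, le_rfl⟩) (le_antisymm (hlam hqi.le) hi.1)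

theorem enorm2_eq_norm_toLp {ι : Type*} [Fintype ι] (z : ι → ℝ) :
    enorm2 z = ‖WithLp.toLp 2 z‖ := by
  simp [enorm2, EuclideanSpace.norm_eq]

theorem exists_orthonormalBasis_toLp_eq {ι : Type*} [Fintype ι] [DecidableEq ι] {v : ι → ι → ℝ}
    (hv : ∀ i j, v i ⬝ᵥ v j = if i = j then 1 else 0) :
    ∃ b : OrthonormalBasis ι ℝ (EuclideanSpace ℝ ι), ∀ i, b i = WithLp.toLp 2 (v i) := by
  have he : Orthonormal ℝ fun i => WithLp.toLp 2 (v i) := by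
    rw [orthonormal_iff_ite]
    intro i j
    simp [EuclideanSpace.inner_toLp_toLp, hv, eq_comm]
  exact ⟨OrthonormalBasis.mk he (he.linearIndependent.span_eq_top_of_card_eq_finrank'
    (by simp)).ge, fun i => by simp⟩

theorem blend_error_bound_general
    {n : ℕ} (M : Matrix (Fin n) (Fin n) ℝ)
    (lam : Fin n → ℝ) (hmono : Antitone lam)
    (v : Fin n → Fin n → ℝ)
    (hortho : ∀ i j, v i ⬝ᵥ v j = if i = j then (1 : ℝ) else 0)
    (heig : ∀ i, M.mulVec (v i) = lam i • v i)
    (p q : Fin n) (hpq : p ≤ q)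
    (x : Fin n → ℝ) (hx : enorm2 x = 1)
    (μ : ℝ)
    (hμmem : lam q ≤ μ ∧ μ ≤ lam p)
    (δ : ℝ)
    (hδ : IsLeast {r : ℝ | ∃ k : Fin n, (k < p ∨ q < k) ∧ r = |lam k - μ|} δ)
    (ε : ℝ) (hε : ε = enorm2 (M.mulVec x - μ • x))
    (hεδ : ε ≤ δ) :
    ∃ w : Fin n → ℝ,
      w ∈ (⨆ j ∈ Finset.Icc p q, Module.End.eigenspace (Matrix.mulVecLin M) (lam j)) ∧
      enorm2 w = 1 ∧ enorm2 (x - w) ≤ Real.sqrt 2 * ε / δ := by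
  obtain ⟨b, hb⟩ := exists_orthonormalBasis_toLp_eq hortho
  -- Selecting by eigenvalue rather than by index keeps `μ` off the spectrum outside `s`.
  let s := Finset.univ.filter fun i => lam q ≤ lam i ∧ lam i ≤ lam p
  have hA : ∀ i, Matrix.toLpLin 2 2 M (b i) = lam i • b i := fun i => by
    rw [hb, Matrix.toLpLin_toLp, Matrix.toLin'_apply, heig, WithLp.toLp_smul]
  let K : Submodule ℝ (EuclideanSpace ℝ (Fin n)) :=
    (⨆ j ∈ Finset.Icc p q, Module.End.eigenspace (Matrix.mulVecLin M) (lam j)).comap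
      (WithLp.linearEquiv 2 ℝ (Fin n → ℝ)).toLinearMap
  have hK : ∀ i ∈ s, b i ∈ K := fun i hi => by
    rw [Submodule.mem_comap, hb]
    exact Module.End.mem_iSup_eigenspace_Icc hmono hpq (Finset.mem_filter.1 hi).2 (heig i)
  have hgap : ∀ i ∉ s, δ ≤ |lam i - μ| := fun i hi => by
    refine hδ.2 ⟨i, ?_, rfl⟩
    by_contra! hpiq
    exact hi (by simp [s, hmono hpiq.1, hmono hpiq.2])
  have hne : ∀ i ∉ s, lam i ≠ μ := fun i hi hiμ => hi (by simp [s, hiμ, hμmem])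
  obtain ⟨w, hwX, hw, hxw⟩ := b.exists_norm_eq_one_norm_sub_le_of_norm_residual_le hA
    ⟨p, by simp [s, hmono hpq]⟩ hK hgap hne (x := WithLp.toLp 2 x)
    (by rwa [← enorm2_eq_norm_toLp]) (by rw [hε, enorm2_eq_norm_toLp]; simp) hεδ
  refine ⟨WithLp.ofLp w, hwX, by rwa [enorm2_eq_norm_toLp, WithLp.toLp_ofLp], ?_⟩
  rwa [enorm2_eq_norm_toLp, WithLp.toLp_sub, WithLp.toLp_ofLp]

/-- Let `M` be symmetric with eigenvalues `λ₁ ≥ ⋯ ≥ λ_n`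
(encoded by an antitone listing `lam` together with an orthonormal eigenbasis `v`),
let `p ≤ q`, and let `x` be a unit vector with Rayleigh quotient
`μ = xᵀMx ∈ [λ_q, λ_p]`.  With `δ = min{|λ_k − μ| : k < p ∨ k > q}` (the exterior
index set being nonempty) and `X_p^q` the sum of the eigenspaces of `λ_p, …, λ_q`,
if the eigenresidual `ε = ‖Mx − μx‖₂` satisfies `ε ≤ δ`, then there is a unit
vector `v ∈ X_p^q` with `‖x − v‖₂ ≤ √2 · ε / δ`. -/
theorem blend_error_bound
    {n : ℕ} (M : Matrix (Fin n) (Fin n) ℝ) (hM : M.IsSymm)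
    (lam : Fin n → ℝ) (hmono : Antitone lam)
    (v : Fin n → Fin n → ℝ)
    (hortho : ∀ i j, v i ⬝ᵥ v j = if i = j then (1 : ℝ) else 0)
    (heig : ∀ i, M.mulVec (v i) = lam i • v i)
    (p q : Fin n) (hpq : p ≤ q)
    (x : Fin n → ℝ) (hx : enorm2 x = 1)
    (μ : ℝ) (hμ : μ = x ⬝ᵥ M.mulVec x)
    (hμmem : lam q ≤ μ ∧ μ ≤ lam p)
    (hne : ∃ k : Fin n, k < p ∨ q < k)
    (δ : ℝ)
    (hδ : IsLeast {r : ℝ | ∃ k : Fin n, (k < p ∨ q < k) ∧ r = |lam k - μ|} δ)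
    (ε : ℝ) (hε : ε = enorm2 (M.mulVec x - μ • x))
    (hεδ : ε ≤ δ) :
    ∃ w : Fin n → ℝ,
      w ∈ (⨆ j ∈ Finset.Icc p q, Module.End.eigenspace (Matrix.mulVecLin M) (lam j)) ∧
      enorm2 w = 1 ∧ enorm2 (x - w) ≤ Real.sqrt 2 * ε / δ :=
  blend_error_bound_general M lam hmono v hortho heig p q hpq x hx μ hμmem δ hδ ε hε hεδ
end

section
/- Let G be a connected graph on n vertices with adjacency matrix A, degree matrix D, minimum degree d_min, maximum degree d_max, and normalized adjacency matrix Â = D^{−1/2} A D^{−1/2} with eigenvalues λ₁ ≥ ⋯ ≥ λ_n. Let ψ > 0, let v₁, …, v_q be orthonormal eigenvectors of Â associated with λ₁, …, λ_q, and let V = span{D^{−1/2}v₁, …, D^{−1/2}v_q}. Assume that for every unit vector v ∈ V there is a threshold t with φ(S_v(t)) ≤ ψ, define g_v = max{min_i |v_i − t| : t ∈ ℝ with φ(S_v(t)) ≤ ψ}, and set g = min{g_v : v ∈ V, ‖v‖₂ = 1}. Let x be a unit vector with μ = xᵀÂx ∈ [λ_q, λ₁] and δ = min{|λ_k − μ|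 : k > q}. If ‖Âx − μx‖₂ < (1/√2)·√(d_min/d_max)·δ·g, then φ(D^{−1/2}x) ≤ ψ. -/
open Matrix Finset

/-- Volume of a vertex subset `S`: total weight of edges within `S`. -/
noncomputable def gvol {V : Type*} [Fintype V] [DecidableEq V] (A : Matrix V V ℝ) (S : Finset V) : ℝ :=
  ∑ i ∈ S, ∑ j ∈ S, A i j

/-- Cut of a vertex subset `S`: total weight of edges leaving `S`. -/
noncomputable def gcut {V : Type*} [Fintype V] [DecidableEq V] (A : Matrix V V ℝ) (S : Finset V) : ℝ :=
  ∑ i ∈ S, ∑ j ∈ Sᶜ, A i j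

/-- Conductance of a vertex subset `S`. -/
noncomputable def gcond {V : Type*} [Fintype V] [DecidableEq V] (A : Matrix V V ℝ) (S : Finset V) : ℝ :=
  gcut A S / min (gvol A S) (gvol A Sᶜ)

/-- The sweep cut of a vector `x` at threshold `t`: `{i : x i > t}`. -/
noncomputable def sweepSet {V : Type*} [Fintype V] (x : V → ℝ) (t : ℝ) : Finset V :=
  Finset.univ.filter fun i => t < x i

/-- `φ(x)`: the minimal conductance over all (proper, nonempty) sweep cuts of `x`. -/
noncomputable def sweepCond {V : Type*} [Fintype V] [DecidableEq V] (A : Matrix V V ℝ) (x : V → ℝ) : ℝ :=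
  sInf {c : ℝ | ∃ t : ℝ, (sweepSet x t).Nonempty ∧ (sweepSet x t)ᶜ.Nonempty ∧
    c = gcond A (sweepSet x t)}

/-- `g_w`: the largest value of `min_i |w_i − t|` over thresholds `t` whose sweep cut
has conductance at most `ψ`. -/
noncomputable def sweepRobustness {V : Type*} [Fintype V] [DecidableEq V]
    (A : Matrix V V ℝ) (ψ : ℝ) (w : V → ℝ) : ℝ :=
  sSup {m : ℝ | ∃ t : ℝ, (sweepSet w t).Nonempty ∧ (sweepSet w t)ᶜ.Nonempty ∧
    gcond A (sweepSet w t) ≤ ψ ∧ m = sInf {r : ℝ | ∃ i : V, r = |w i - t|}}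

/- ----------------- auxiliary lemmas ----------------- -/

lemma enorm2_nonneg {ι : Type*} [Fintype ι] (x : ι → ℝ) : 0 ≤ enorm2 x :=
  Real.sqrt_nonneg _

lemma enorm2_sq {ι : Type*} [Fintype ι] (x : ι → ℝ) : (enorm2 x)^2 = ∑ i, x i ^ 2 := by
  rw [enorm2, Real.sq_sqrt]
  positivity

lemma enorm2_smul {ι : Type*} [Fintype ι] (c : ℝ) (x : ι → ℝ) :
    enorm2 (c • x) = |c| * enorm2 x := by
  unfold enorm2
  rw [← Real.sqrt_sq_eq_abs, ← Real.sqrt_mul (sq_nonneg c), Finset.mul_sum]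
  congr 1
  apply Finset.sum_congr rfl
  intro i _
  simp [Pi.smul_apply, mul_pow]

lemma coord_le_enorm2 {ι : Type*} [Fintype ι] (x : ι → ℝ) (i : ι) : |x i| ≤ enorm2 x := by
  rw [← Real.sqrt_sq_eq_abs, enorm2]
  apply Real.sqrt_le_sqrt
  exact Finset.single_le_sum (f := fun j => x j ^ 2) (fun j _ => sq_nonneg _) (mem_univ i)

section ortho
variable {n : ℕ} (v : Fin n → Fin n → ℝ)
  (hortho : ∀ i j, v i ⬝ᵥ v j = if i = j then (1 : ℝ) else 0)

include hortho

lemma ortho_complete : ∀ i j, ∑ k, v k i * v k j = if i = j then (1:ℝ) else 0 := by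
  have hP : (Matrix.of v) * (Matrix.of v)ᵀ = 1 := by
    ext i j
    simp only [Matrix.mul_apply, Matrix.transpose_apply, Matrix.of_apply, Matrix.one_apply]
    exact hortho i j
  have hP2 : (Matrix.of v)ᵀ * (Matrix.of v) = 1 := mul_eq_one_comm.mp hP
  intro i j
  have := congrFun (congrFun hP2 i) j
  simpa [Matrix.mul_apply, Matrix.transpose_apply, Matrix.of_apply, Matrix.one_apply] using this

lemma ortho_expand (x : Fin n → ℝ) : ∀ j, x j = ∑ k, (v k ⬝ᵥ x) * v k j := by
  intro j
  have h := ortho_complete v hortho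
  calc x j = ∑ i, (if i = j then (1:ℝ) else 0) * x i := by simp
    _ = ∑ i, (∑ k, v k i * v k j) * x i := by
        apply Finset.sum_congr rfl; intro i _; rw [h i j]
    _ = ∑ i, ∑ k, v k i * v k j * x i := by
        apply Finset.sum_congr rfl; intro i _; rw [Finset.sum_mul]
    _ = ∑ k, ∑ i, v k i * v k j * x i := Finset.sum_comm
    _ = ∑ k, (v k ⬝ᵥ x) * v k j := by
        apply Finset.sum_congr rfl; intro k _
        simp only [dotProduct, Finset.sum_mul]
        apply Finset.sum_congr rfl; intro i _; ring

lemma ortho_parseval (a : Fin n → ℝ) :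
    ∑ i, (∑ k, a k * v k i)^2 = ∑ k, (a k)^2 := by
  calc ∑ i, (∑ k, a k * v k i)^2
      = ∑ i, ∑ k, ∑ l, (a k * a l) * (v k i * v l i) := by
        apply Finset.sum_congr rfl; intro i _
        rw [sq, Finset.sum_mul_sum]
        apply Finset.sum_congr rfl; intro k _
        apply Finset.sum_congr rfl; intro l _; ring
    _ = ∑ k, ∑ l, ∑ i, (a k * a l) * (v k i * v l i) := by
        rw [Finset.sum_comm]
        apply Finset.sum_congr rfl; intro k _
        rw [Finset.sum_comm]
    _ = ∑ k, ∑ l, (a k * a l) * (v k ⬝ᵥ v l) := by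
        apply Finset.sum_congr rfl; intro k _
        apply Finset.sum_congr rfl; intro l _
        rw [dotProduct, Finset.mul_sum]
    _ = ∑ k, (a k)^2 := by
        apply Finset.sum_congr rfl; intro k _
        rw [Finset.sum_eq_single k]
        · rw [hortho k k]; simp [sq]
        · intro l _ hl; rw [hortho k l, if_neg (Ne.symm hl), mul_zero]
        · intro h; exact absurd (Finset.mem_univ k) h

end ortho

lemma gcond_nonneg {V : Type*} [Fintype V] [DecidableEq V] {A : Matrix V V ℝ}
    (hA : ∀ i j, 0 ≤ A i j) (S : Finset V) : 0 ≤ gcond A S := by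
  have h1 : 0 ≤ gcut A S := Finset.sum_nonneg fun i _ => Finset.sum_nonneg fun j _ => hA i j
  have h2 : 0 ≤ gvol A S := Finset.sum_nonneg fun i _ => Finset.sum_nonneg fun j _ => hA i j
  have h3 : 0 ≤ gvol A Sᶜ := Finset.sum_nonneg fun i _ => Finset.sum_nonneg fun j _ => hA i j
  exact div_nonneg h1 (le_min h2 h3)

lemma robust_mem_bounds {V : Type*} [Fintype V] [DecidableEq V] (A : Matrix V V ℝ)
    (ψ : ℝ) (w : V → ℝ) (hw : enorm2 w = 1) {m : ℝ}
    (hm : m ∈ {m : ℝ | ∃ t : ℝ, (sweepSet w t).Nonempty ∧ (sweepSet w t)ᶜ.Nonempty ∧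
      gcond A (sweepSet w t) ≤ ψ ∧ m = sInf {r : ℝ | ∃ i : V, r = |w i - t|}}) :
    0 ≤ m ∧ m ≤ 1 := by
  obtain ⟨t, h1, h2, _, hmeq⟩ := hm
  have hbdd : BddBelow {r : ℝ | ∃ i : V, r = |w i - t|} :=
    ⟨0, fun r ⟨i, hi⟩ => hi ▸ abs_nonneg _⟩
  refine ⟨hmeq ▸ Real.sInf_nonneg fun r ⟨i, hi⟩ => hi ▸ abs_nonneg _, ?_⟩
  obtain ⟨i, hi⟩ := h1
  obtain ⟨j, hj⟩ := h2
  have hti : t < w i := by simpa [sweepSet] using hi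
  have htj : w j ≤ t := by
    have := Finset.mem_compl.mp hj
    simpa [sweepSet, not_lt] using this
  have hmi : m ≤ |w i - t| := hmeq ▸ csInf_le hbdd ⟨i, rfl⟩
  have hmj : m ≤ |w j - t| := hmeq ▸ csInf_le hbdd ⟨j, rfl⟩
  have e1 : |w i - t| = w i - t := abs_of_pos (by linarith)
  have e2 : |w j - t| = t - w j := by rw [abs_of_nonpos (by linarith)]; ring
  have bi : |w i| ≤ 1 := hw ▸ coord_le_enorm2 w i
  have bj : |w j| ≤ 1 := hw ▸ coord_le_enorm2 w j
  have bi' : w i ≤ 1 := le_trans (le_abs_self _) bi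
  have bj' : -1 ≤ w j := le_trans (neg_le_neg bj) (neg_abs_le _)
  rw [e1] at hmi; rw [e2] at hmj
  linarith

lemma sweepRobustness_nonneg {V : Type*} [Fintype V] [DecidableEq V] (A : Matrix V V ℝ)
    (ψ : ℝ) (w : V → ℝ) : 0 ≤ sweepRobustness A ψ w := by
  apply Real.sSup_nonneg
  rintro m ⟨t, _, _, _, hmeq⟩
  exact hmeq ▸ Real.sInf_nonneg fun r ⟨i, hi⟩ => hi ▸ abs_nonneg _

set_option maxHeartbeats 2000000

lemma sweepRobustness_le_one {V : Type*} [Fintype V] [DecidableEq V] (A : Matrix V V ℝ)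
    (ψ : ℝ) (w : V → ℝ) (hw : enorm2 w = 1) : sweepRobustness A ψ w ≤ 1 :=
  Real.sSup_le (fun _ hm => (robust_mem_bounds A ψ w hw hm).2) zero_le_one

/-- (Theorem on preservation of low-conductance sweep cuts by
approximate spectral blends, for the normalized adjacency matrix of a connected graph.) -/
theorem blend_subspace_conductance
    {n : ℕ} (hn : 0 < n) (G : SimpleGraph (Fin n)) [DecidableRel G.Adj]
    (hconn : G.Connected)
    (A : Matrix (Fin n) (Fin n) ℝ) (hA : A = G.adjMatrix ℝ)
    (d : Fin n → ℝ) (hd : ∀ i, d i = (G.degree i : ℝ))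
    (dmin dmax : ℝ)
    (hdmin : IsLeast (Set.range d) dmin) (hdmax : IsGreatest (Set.range d) dmax)
    (Ahat : Matrix (Fin n) (Fin n) ℝ)
    (hAhat : Ahat = Matrix.diagonal (fun i => 1 / Real.sqrt (d i)) * A *
      Matrix.diagonal (fun i => 1 / Real.sqrt (d i)))
    (lam : Fin n → ℝ) (hmono : Antitone lam)
    (v : Fin n → Fin n → ℝ)
    (hortho : ∀ i j, v i ⬝ᵥ v j = if i = j then (1 : ℝ) else 0)
    (heig : ∀ i, Ahat.mulVec (v i) = lam i • v i)
    (ψ : ℝ) (hψ : 0 < ψ)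
    (q : Fin n)
    (Vsub : Submodule ℝ (Fin n → ℝ))
    (hV : Vsub = Submodule.span ℝ
      {w : Fin n → ℝ | ∃ j : Fin n, j ≤ q ∧ w = fun i => (1 / Real.sqrt (d i)) * v j i})
    (hcuts : ∀ w ∈ Vsub, enorm2 w = 1 → ∃ t : ℝ, (sweepSet w t).Nonempty ∧
      (sweepSet w t)ᶜ.Nonempty ∧ gcond A (sweepSet w t) ≤ ψ)
    (g : ℝ)
    (hg : g = sInf {a : ℝ | ∃ w ∈ Vsub, enorm2 w = 1 ∧ a = sweepRobustness A ψ w})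
    (x : Fin n → ℝ) (hx : enorm2 x = 1)
    (μ : ℝ) (hμ : μ = x ⬝ᵥ Ahat.mulVec x)
    (hμmem : lam q ≤ μ ∧ μ ≤ lam ⟨0, hn⟩)
    (δ : ℝ) (hδ : δ = sInf {r : ℝ | ∃ k : Fin n, q < k ∧ r = |lam k - μ|})
    (hres : enorm2 (Ahat.mulVec x - μ • x) <
      (1 / Real.sqrt 2) * Real.sqrt (dmin / dmax) * δ * g) :
    sweepCond A (fun i => (1 / Real.sqrt (d i)) * x i) ≤ ψ := by
  -- nonnegativity of the adjacency matrix
  have hA0 : ∀ i j, (0:ℝ) ≤ A i j := by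
    intro i j
    rw [hA, SimpleGraph.adjMatrix_apply]
    split <;> norm_num
  -- positivity bootstrapping from hres
  have hr0 : 0 ≤ enorm2 (Ahat.mulVec x - μ • x) := enorm2_nonneg _
  have hRHS : 0 < 1 / Real.sqrt 2 * Real.sqrt (dmin / dmax) * δ * g := lt_of_le_of_lt hr0 hres
  have hδ0 : 0 ≤ δ := by
    rw [hδ]
    exact Real.sInf_nonneg fun r ⟨k, _, hk⟩ => hk ▸ abs_nonneg _
  have hsdd : 0 ≤ Real.sqrt (dmin/dmax) := Real.sqrt_nonneg _
  have hs2 : 0 < Real.sqrt 2 := Real.sqrt_pos.2 (by norm_num)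
  have hδg : 0 < δ * g := by
    by_contra h
    push_neg at h
    have h2 : 1 / Real.sqrt 2 * Real.sqrt (dmin/dmax) * δ * g
        = (1 / Real.sqrt 2 * Real.sqrt (dmin/dmax)) * (δ * g) := by ring
    have h3 : (1 / Real.sqrt 2 * Real.sqrt (dmin/dmax)) * (δ * g) ≤ 0 :=
      mul_nonpos_of_nonneg_of_nonpos (by positivity) h
    rw [h2] at hRHS
    linarith
  have hδpos : 0 < δ := by
    rcases eq_or_lt_of_le hδ0 with h | h
    · exfalso; rw [← h, zero_mul] at hδg; exact lt_irrefl 0 hδg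
    · exact h
  have hgpos : 0 < g := by
    rcases mul_pos_iff.mp hδg with ⟨_, h⟩ | ⟨h, _⟩
    · exact h
    · linarith
  have hsddpos : 0 < Real.sqrt (dmin/dmax) := by
    rcases eq_or_lt_of_le hsdd with h | h
    · exfalso
      rw [← h] at hRHS
      simp at hRHS
    · exact h
  have hdd : 0 < dmin/dmax := Real.sqrt_pos.mp hsddpos
  have hd_nonneg : ∀ i, 0 ≤ d i := fun i => by rw [hd]; positivity
  have hdmin0 : 0 ≤ dmin := by
    obtain ⟨i, hi⟩ := hdmin.1
    exact hi ▸ hd_nonneg i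
  have hminlemax : dmin ≤ dmax := hdmax.2 hdmin.1
  have hdmaxpos : 0 < dmax := by
    by_contra h
    push_neg at h
    have : dmin/dmax ≤ 0 := div_nonpos_of_nonneg_of_nonpos hdmin0 h
    linarith
  have hdminpos : 0 < dmin := by
    have h1 : dmin = dmin/dmax*dmax := (div_mul_cancel₀ _ hdmaxpos.ne').symm
    rw [h1]
    exact mul_pos hdd hdmaxpos
  have hdpos : ∀ i, 0 < d i := fun i => lt_of_lt_of_le hdminpos (hdmin.2 ⟨i, rfl⟩)
  have hsd : ∀ i, 0 < Real.sqrt (d i) := fun i => Real.sqrt_pos.2 (hdpos i)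
  have hsdmin : 0 < Real.sqrt dmin := Real.sqrt_pos.2 hdminpos
  -- spectral decomposition
  set c : Fin n → ℝ := fun k => v k ⬝ᵥ x with hc
  have hcomp : ∀ j, x j = ∑ k, c k * v k j := by
    intro j
    simp only [hc]
    exact ortho_expand v hortho x j
  have hxsum : x = ∑ k, c k • v k := by
    funext j
    rw [Finset.sum_apply]
    simpa [smul_eq_mul] using hcomp j
  have hsum_c : ∑ k, (c k)^2 = 1 := by
    have h1 := ortho_parseval v hortho c
    have h2 : ∑ i, (∑ k, c k * v k i)^2 = ∑ i, x i ^2 := by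
      apply Finset.sum_congr rfl; intro i _; rw [← hcomp i]
    have h3 : ∑ i, x i^2 = 1 := by
      have h4 := enorm2_sq x
      rw [hx] at h4
      simpa using h4.symm
    rw [← h1, h2, h3]
  have hmv : Ahat.mulVec x = ∑ k, (lam k * c k) • v k := by
    rw [hxsum]
    calc Ahat.mulVec (∑ k, c k • v k) = Ahat.mulVecLin (∑ k, c k • v k) :=
          (Matrix.mulVecLin_apply _ _).symm
      _ = ∑ k, Ahat.mulVecLin (c k • v k) := map_sum _ _ _
      _ = ∑ k, (lam k * c k) • v k := by
          apply Finset.sum_congr rfl; intro k _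
          rw [_root_.map_smul, Matrix.mulVecLin_apply, heig k, smul_smul, mul_comm]
  have hres_eq : Ahat.mulVec x - μ • x = ∑ k, ((lam k - μ) * c k) • v k := by
    rw [hmv]
    nth_rewrite 1 [hxsum]
    rw [Finset.smul_sum, ← Finset.sum_sub_distrib]
    apply Finset.sum_congr rfl; intro k _
    rw [smul_smul, ← sub_smul]
    congr 1
    ring
  have hres_coord : ∀ j, (Ahat.mulVec x - μ • x) j = ∑ k, ((lam k - μ) * c k) * v k j := by
    intro j
    rw [hres_eq, Finset.sum_apply]
    apply Finset.sum_congr rfl; intro k _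
    simp [smul_eq_mul]
  set r := enorm2 (Ahat.mulVec x - μ • x) with hrdef
  have hr2 : r^2 = ∑ k, ((lam k - μ) * c k)^2 := by
    rw [hrdef, enorm2_sq, ← ortho_parseval v hortho (fun k => (lam k - μ) * c k)]
    apply Finset.sum_congr rfl; intro j _
    rw [hres_coord j]
  set E := ∑ k ∈ Finset.univ.filter (fun k => q < k), (c k)^2 with hEdef
  have hE0 : 0 ≤ E := Finset.sum_nonneg fun k _ => sq_nonneg _
  have hδle : ∀ k, q < k → δ ≤ |lam k - μ| := by
    intro k hk
    rw [hδ]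
    exact csInf_le ⟨0, fun rr ⟨k', _, hk'⟩ => hk' ▸ abs_nonneg _⟩ ⟨k, hk, rfl⟩
  have hE1 : δ^2 * E ≤ r^2 := by
    rw [hr2, hEdef, Finset.mul_sum]
    calc ∑ k ∈ Finset.univ.filter (fun k => q < k), δ^2 * c k^2
        ≤ ∑ k ∈ Finset.univ.filter (fun k => q < k), ((lam k - μ)*c k)^2 := by
          apply Finset.sum_le_sum
          intro k hk
          have hk' : q < k := (Finset.mem_filter.mp hk).2
          have h1 : δ ≤ |lam k - μ| := hδle k hk'
          have h2 : δ^2 ≤ (lam k - μ)^2 := by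
            rw [← sq_abs (lam k - μ)]
            exact pow_le_pow_left₀ hδ0 h1 2
          rw [mul_pow]
          exact mul_le_mul_of_nonneg_right h2 (sq_nonneg _)
      _ ≤ ∑ k, ((lam k - μ)*c k)^2 :=
          Finset.sum_le_sum_of_subset_of_nonneg (Finset.filter_subset _ _)
            (fun k _ _ => sq_nonneg _)
  -- existence of a unit vector in Vsub, hence g ≤ 1
  have hvq : ∃ i0, v q i0 ≠ 0 := by
    by_contra h
    push_neg at h
    have h1 : v q ⬝ᵥ v q = 0 := by
      rw [dotProduct]
      exact Finset.sum_eq_zero fun i _ => by rw [h i, zero_mul]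
    rw [hortho q q, if_pos rfl] at h1
    norm_num at h1
  set u0 : Fin n → ℝ := fun i => (1 / Real.sqrt (d i)) * v q i with hu0
  have hu0mem : u0 ∈ Vsub := by
    rw [hV]
    exact Submodule.subset_span ⟨q, le_refl q, rfl⟩
  have hu0pos : 0 < enorm2 u0 := by
    obtain ⟨i0, hi0⟩ := hvq
    have hne : u0 i0 ≠ 0 := by
      simp only [hu0]
      exact mul_ne_zero (one_div_ne_zero (hsd i0).ne') hi0
    have h1 : 0 < u0 i0 ^ 2 := lt_of_le_of_ne (sq_nonneg _) (Ne.symm (pow_ne_zero 2 hne))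
    have h2 : 0 < ∑ i, u0 i ^2 :=
      lt_of_lt_of_le h1 (Finset.single_le_sum (f := fun i => u0 i ^2)
        (fun i _ => sq_nonneg _) (Finset.mem_univ i0))
    exact Real.sqrt_pos.2 h2
  set w0 : Fin n → ℝ := (enorm2 u0)⁻¹ • u0 with hw0
  have hw0unit : enorm2 w0 = 1 := by
    rw [hw0, enorm2_smul, abs_of_pos (inv_pos.2 hu0pos), inv_mul_cancel₀ hu0pos.ne']
  have hw0mem : w0 ∈ Vsub := Submodule.smul_mem _ _ hu0mem
  have hgset_bdd : BddBelow {a : ℝ | ∃ w ∈ Vsub, enorm2 w = 1 ∧ a = sweepRobustness A ψ w} :=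
    ⟨0, fun a ⟨w', _, _, ha⟩ => ha ▸ sweepRobustness_nonneg A ψ w'⟩
  have hg1 : g ≤ 1 := by
    rw [hg]
    exact le_trans (csInf_le hgset_bdd ⟨w0, hw0mem, hw0unit, rfl⟩)
      (sweepRobustness_le_one A ψ w0 hw0unit)
  -- bounds on E
  have hsdd2 : (Real.sqrt (dmin/dmax))^2 = dmin/dmax := Real.sq_sqrt hdd.le
  have hs2sq : (Real.sqrt 2)^2 = 2 := Real.sq_sqrt (by norm_num)
  have hrsq_lt : r^2 < (1/2) * (dmin/dmax) * (δ^2 * g^2) := by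
    have h1 : r^2 < (1/Real.sqrt 2 * Real.sqrt (dmin/dmax) * δ * g)^2 := by
      have := mul_self_lt_mul_self hr0 hres
      calc r^2 = r*r := sq r
        _ < _ * _ := this
        _ = (1/Real.sqrt 2 * Real.sqrt (dmin/dmax) * δ * g)^2 := (sq _).symm
    calc r^2 < (1/Real.sqrt 2 * Real.sqrt (dmin/dmax) * δ * g)^2 := h1
      _ = (1/2)*(dmin/dmax)*(δ^2*g^2) := by
          rw [mul_pow, mul_pow, mul_pow, div_pow, one_pow, hs2sq, hsdd2]
          ring
  have hE3 : E < (1/2)*(dmin/dmax)*g^2 := by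
    have h2 : δ^2 * E < δ^2 * ((1/2)*(dmin/dmax)*g^2) := by
      calc δ^2 * E ≤ r^2 := hE1
        _ < (1/2)*(dmin/dmax)*(δ^2*g^2) := hrsq_lt
        _ = δ^2 * ((1/2)*(dmin/dmax)*g^2) := by ring
    exact lt_of_mul_lt_mul_left h2 (sq_nonneg δ)
  have hEbound : E * dmax < (1/2) * dmin * g^2 := by
    calc E * dmax < ((1/2)*(dmin/dmax)*g^2) * dmax := mul_lt_mul_of_pos_right hE3 hdmaxpos
      _ = (1/2)*dmin*g^2 := by field_simp
  have hg2le1 : g^2 ≤ 1 := by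
    calc g^2 = g*g := sq g
      _ ≤ 1 := mul_le_one₀ hg1 hgpos.le hg1
  have hddle1 : dmin/dmax ≤ 1 := (div_le_one hdmaxpos).2 hminlemax
  have hEhalf : E < 1/2 := by
    have h1 : (dmin/dmax)*g^2 ≤ 1 := mul_le_one₀ hddle1 (sq_nonneg g) hg2le1
    linarith [hE3, h1]
  -- the projection p and its norms
  set P := Finset.univ.filter (fun k : Fin n => ¬ q < k) with hPdef
  set p : Fin n → ℝ := fun j => ∑ k ∈ P, c k * v k j with hpdef
  have hPsum : ∑ k ∈ P, c k^2 = 1 - E := by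
    have hsplit := Finset.sum_filter_add_sum_filter_not Finset.univ
      (fun k : Fin n => q < k) (fun k => c k^2)
    rw [hsum_c] at hsplit
    rw [hPdef]
    rw [hEdef]
    linarith [hsplit]
  have hpnorm : ∑ j, p j^2 = 1 - E := by
    have h1 := ortho_parseval v hortho (fun k => if ¬ q < k then c k else 0)
    calc ∑ j, p j^2 = ∑ j, (∑ k, (if ¬ q < k then c k else 0) * v k j)^2 := by
          apply Finset.sum_congr rfl; intro j _
          congr 1
          rw [hpdef]
          simp only
          rw [hPdef, Finset.sum_filter]
          apply Finset.sum_congr rfl; intro k _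
          by_cases h : q < k <;> simp [h]
      _ = ∑ k, (if ¬ q < k then c k else 0)^2 := h1
      _ = ∑ k ∈ P, c k^2 := by
          rw [hPdef, Finset.sum_filter]
          apply Finset.sum_congr rfl; intro k _
          by_cases h : q < k <;> simp [h]
      _ = 1 - E := hPsum
  have hxp : ∀ j, x j - p j = ∑ k, (if q < k then c k else 0) * v k j := by
    intro j
    rw [hcomp j, hpdef]
    simp only
    rw [hPdef, Finset.sum_filter, ← Finset.sum_sub_distrib]
    apply Finset.sum_congr rfl; intro k _
    by_cases h : q < k <;> simp [h]
  have hxpnorm : ∑ j, (x j - p j)^2 = E := by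
    have h1 := ortho_parseval v hortho (fun k => if q < k then c k else 0)
    calc ∑ j, (x j - p j)^2 = ∑ j, (∑ k, (if q < k then c k else 0) * v k j)^2 := by
          apply Finset.sum_congr rfl; intro j _
          rw [hxp j]
      _ = ∑ k, (if q < k then c k else 0)^2 := h1
      _ = E := by
          rw [hEdef, Finset.sum_filter]
          apply Finset.sum_congr rfl; intro k _
          by_cases h : q < k <;> simp [h]
  set sE := Real.sqrt E with hsEdef
  have hsE0 : 0 ≤ sE := Real.sqrt_nonneg _
  have hxp_enorm : enorm2 (fun j => x j - p j) = sE := by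
    rw [hsEdef, enorm2]
    exact congrArg Real.sqrt hxpnorm
  have hcoord : ∀ i, |x i - p i| ≤ sE := by
    intro i
    have h := coord_le_enorm2 (fun j => x j - p j) i
    rwa [hxp_enorm] at h
  -- the comparison vector w and its norm β
  set w' : Fin n → ℝ := fun i => (1 / Real.sqrt (d i)) * p i with hw'def
  set β := enorm2 w' with hβdef
  have hβ2 : (1 - E) ≤ β^2 * dmax := by
    have h2 : ∀ i, p i^2 / dmax ≤ w' i^2 := by
      intro i
      have h3 : w' i^2 = p i^2 / d i := by
        simp only [hw'def]
        rw [mul_pow, div_pow, one_pow, Real.sq_sqrt (hdpos i).le]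
        ring
      rw [h3]
      exact div_le_div_of_nonneg_left (sq_nonneg _) (hdpos i) (hdmax.2 ⟨i, rfl⟩)
    have h3 : (1-E)/dmax ≤ β^2 := by
      calc (1-E)/dmax = ∑ i, p i^2 / dmax := by rw [← Finset.sum_div, hpnorm]
        _ ≤ ∑ i, w' i^2 := Finset.sum_le_sum (fun i _ => h2 i)
        _ = β^2 := by rw [hβdef, enorm2_sq]
    calc 1 - E = ((1-E)/dmax)*dmax := by field_simp
      _ ≤ β^2*dmax := mul_le_mul_of_nonneg_right h3 hdmaxpos.le
  have hβ0 : 0 ≤ β := enorm2_nonneg w'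
  have hβpos : 0 < β := by
    rcases eq_or_lt_of_le hβ0 with h | h
    · exfalso
      rw [← h] at hβ2
      norm_num at hβ2
      linarith
    · exact h
  set w : Fin n → ℝ := β⁻¹ • w' with hwdef
  have hwunit : enorm2 w = 1 := by
    rw [hwdef, enorm2_smul, abs_of_pos (inv_pos.2 hβpos), ← hβdef, inv_mul_cancel₀ hβpos.ne']
  have hwmem : w ∈ Vsub := by
    apply Submodule.smul_mem
    rw [hV]
    have heq : w' = ∑ k ∈ P, c k • (fun i => (1/Real.sqrt (d i)) * v k i) := by
      funext i
      rw [Finset.sum_apply]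
      simp only [Pi.smul_apply, smul_eq_mul, hw'def, hpdef]
      rw [Finset.mul_sum]
      apply Finset.sum_congr rfl; intro k _
      ring
    rw [heq]
    apply Submodule.sum_smul_mem
    intro k hk
    apply Submodule.subset_span
    rw [hPdef] at hk
    exact ⟨k, not_lt.mp (Finset.mem_filter.mp hk).2, rfl⟩
  -- the perturbation bound B and B < g
  set B := sE / (β * Real.sqrt dmin) with hBdef
  have hBden : 0 < β * Real.sqrt dmin := mul_pos hβpos hsdmin
  have hB0 : 0 ≤ B := div_nonneg hsE0 hBden.le
  have hBg : B < g := by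
    rw [hBdef, div_lt_iff₀ hBden]
    have hy : 0 < g * (β * Real.sqrt dmin) := mul_pos hgpos hBden
    rw [hsEdef, Real.sqrt_lt' hy]
    have hsq : (g*(β*Real.sqrt dmin))^2 = g^2*β^2*dmin := by
      rw [mul_pow, mul_pow, Real.sq_sqrt hdminpos.le]
      ring
    rw [hsq]
    have k1 : (1/2) * dmin * g^2 ≤ (1-E)*(dmin*g^2) := by
      have h := mul_le_mul_of_nonneg_right (show (1/2:ℝ) ≤ 1-E by linarith)
        (mul_nonneg hdminpos.le (sq_nonneg g))
      calc (1/2)*dmin*g^2 = (1/2)*(dmin*g^2) := by ring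
        _ ≤ (1-E)*(dmin*g^2) := h
    have k2 : (1-E)*(dmin*g^2) ≤ (β^2*dmax)*(dmin*g^2) :=
      mul_le_mul_of_nonneg_right hβ2 (mul_nonneg hdminpos.le (sq_nonneg g))
    have k3 : E*dmax < (β^2*dmax)*(dmin*g^2) := lt_of_lt_of_le (lt_of_lt_of_le hEbound k1) k2
    have k4 : E*dmax < (g^2*β^2*dmin)*dmax := by linarith [k3]
    exact lt_of_mul_lt_mul_right k4 hdmaxpos.le
  -- pick a good threshold for w
  have hSWne : {m : ℝ | ∃ t : ℝ, (sweepSet w t).Nonempty ∧ (sweepSet w t)ᶜ.Nonempty ∧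
      gcond A (sweepSet w t) ≤ ψ ∧ m = sInf {r : ℝ | ∃ i : Fin n, r = |w i - t|}}.Nonempty := by
    obtain ⟨t0, h1, h2, h3⟩ := hcuts w hwmem hwunit
    exact ⟨_, t0, h1, h2, h3, rfl⟩
  have hgw : g ≤ sweepRobustness A ψ w := by
    rw [hg]
    exact csInf_le hgset_bdd ⟨w, hwmem, hwunit, rfl⟩
  obtain ⟨m, hmSW, hmgt⟩ := Real.add_neg_lt_sSup hSWne (show B - g < 0 by linarith)
  have hBm : B < m := by
    have h1 : sweepRobustness A ψ w = sSup {m : ℝ | ∃ t : ℝ, (sweepSet w t).Nonempty ∧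
        (sweepSet w t)ᶜ.Nonempty ∧ gcond A (sweepSet w t) ≤ ψ ∧
        m = sInf {r : ℝ | ∃ i : Fin n, r = |w i - t|}} := rfl
    rw [← h1] at hmgt
    linarith
  obtain ⟨t, ht1, ht2, htφ, hmeq⟩ := hmSW
  have hmle : ∀ i, m ≤ |w i - t| := by
    intro i
    rw [hmeq]
    exact csInf_le ⟨0, fun rr ⟨i', hi'⟩ => hi' ▸ abs_nonneg _⟩ ⟨i, rfl⟩
  -- closeness of the rescaled x-vector to w
  set u : Fin n → ℝ := fun i => β⁻¹ * ((1/Real.sqrt (d i)) * x i) with hudef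
  have hclose : ∀ i, |u i - w i| ≤ B := by
    intro i
    have h1 : u i - w i = (x i - p i) / (β * Real.sqrt (d i)) := by
      simp only [hudef, hwdef, Pi.smul_apply, smul_eq_mul, hw'def]
      field_simp
    rw [h1, hBdef, abs_div, abs_of_pos (mul_pos hβpos (hsd i))]
    exact div_le_div₀ hsE0 (hcoord i) hBden
      (mul_le_mul_of_nonneg_left (Real.sqrt_le_sqrt (hdmin.2 ⟨i, rfl⟩)) hβpos.le)
  have hkey : ∀ i, (t < u i ↔ t < w i) := by
    intro i
    have h1 := hclose i
    have h2 := hmle i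
    have h3 := abs_le.mp h1
    constructor
    · intro h
      by_contra h4
      push_neg at h4
      have h5 : |w i - t| = t - w i := by rw [abs_of_nonpos (by linarith)]; ring
      rw [h5] at h2
      linarith [h3.2]
    · intro h
      have h5 : |w i - t| = w i - t := abs_of_pos (by linarith)
      rw [h5] at h2
      linarith [h3.1]
  have hset : sweepSet (fun i => (1/Real.sqrt (d i)) * x i) (β*t) = sweepSet w t := by
    ext i
    simp only [sweepSet, Finset.mem_filter, Finset.mem_univ, true_and]
    have hiu : β*t < (1/Real.sqrt (d i)) * x i ↔ t < u i := by
      simp only [hudef]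
      rw [inv_mul_eq_div, lt_div_iff₀ hβpos, mul_comm]
    rw [hiu, hkey i]
  have hφy : gcond A (sweepSet (fun i => (1/Real.sqrt (d i)) * x i) (β*t)) ≤ ψ := by
    rw [hset]; exact htφ
  have hne1 : (sweepSet (fun i => (1/Real.sqrt (d i)) * x i) (β*t)).Nonempty := by
    rw [hset]; exact ht1
  have hne2 : ((sweepSet (fun i => (1/Real.sqrt (d i)) * x i) (β*t))ᶜ).Nonempty := by
    rw [hset]; exact ht2
  -- conclude
  have hbdd : BddBelow {c : ℝ | ∃ t' : ℝ,
      (sweepSet (fun i => (1/Real.sqrt (d i)) * x i) t').Nonempty ∧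
      (sweepSet (fun i => (1/Real.sqrt (d i)) * x i) t')ᶜ.Nonempty ∧
      c = gcond A (sweepSet (fun i => (1/Real.sqrt (d i)) * x i) t')} :=
    ⟨0, fun cc ⟨t', _, _, hcc⟩ => hcc ▸ gcond_nonneg hA0 _⟩
  have hmem : gcond A (sweepSet (fun i => (1/Real.sqrt (d i)) * x i) (β*t)) ∈
      {c : ℝ | ∃ t' : ℝ,
      (sweepSet (fun i => (1/Real.sqrt (d i)) * x i) t').Nonempty ∧
      (sweepSet (fun i => (1/Real.sqrt (d i)) * x i) t')ᶜ.Nonempty ∧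
      c = gcond A (sweepSet (fun i => (1/Real.sqrt (d i)) * x i) t')} :=
    ⟨β*t, hne1, hne2, rfl⟩
  unfold sweepCond
  exact le_trans (csInf_le hbdd hmem) hφy
end

section
/- For the ring of cliques R_{b,q} with b ≥ 3, every vector x ∈ ℝ^{bq} that is zero on all corner vertices and whose entries sum to zero over the set of internal vertices of each block satisfies Âx = −(b−1)^{−1} x; moreover, the subspace of all such vectors has dimension n − 2q = q(b−2). In particular, −1/(b−1) is an eigenvalue of Â of multiplicity at least n − 2q. -/
/-!
On a vector `x` vanishing at the corners only the clique edges matter, since the cycle edges join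
corners; as the block sums of `x` vanish, `A x = -x`. Both scalings by `D^{-1/2}` act on such
vectors as multiplication by `1/√(b-1)`, so `Â x = -(b-1)⁻¹ x`. The vectors in question form the
kernel of the map recording, for each block, the corner value and the sum over the internal
vertices; this map onto `ℝ^q × ℝ^q` is surjective as soon as a block has an internal vertex, so its
kernel has dimension `qb - 2q`.
-/

open Matrix Finset

/-- Adjacency matrix of the ring of cliques `R_{b,q}`:
`A = I_q ⊗ (1_b 1_bᵀ − I_b) + C_q ⊗ e₁e₁ᵀ`, written entrywise.  Vertices are pairs
`(i, a)` where `i : Fin q` is the block and `a : Fin b` the position within the block;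
`a = 0` is the corner vertex of the block. -/
noncomputable def rocAdj (b q : ℕ) : Matrix (Fin q × Fin b) (Fin q × Fin b) ℝ :=
  Matrix.of fun p r =>
    (if p.1 = r.1 ∧ p.2 ≠ r.2 then (1 : ℝ) else 0) +
    (if ((p.1.val + 1) % q = r.1.val ∨ (r.1.val + 1) % q = p.1.val) ∧
        p.2.val = 0 ∧ r.2.val = 0 then (1 : ℝ) else 0)

/-- Degrees in `R_{b,q}`: the corner of each block has degree `b+1`, internal
vertices have degree `b−1`. -/
noncomputable def rocDeg (b q : ℕ) (p : Fin q × Fin b) : ℝ :=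
  if p.2.val = 0 then (b : ℝ) + 1 else (b : ℝ) - 1

/-- Normalized adjacency matrix `Â = D^{−1/2} A D^{−1/2}` of `R_{b,q}`. -/
noncomputable def rocAhat (b q : ℕ) : Matrix (Fin q × Fin b) (Fin q × Fin b) ℝ :=
  Matrix.diagonal (fun p => 1 / Real.sqrt (rocDeg b q p)) * rocAdj b q *
    Matrix.diagonal (fun p => 1 / Real.sqrt (rocDeg b q p))

theorem Matrix.diagonal_mulVec_eq_smul {n R : Type*} [Fintype n] [DecidableEq n] [Semiring R]
    {d x : n → R} {c : R} (h : ∀ p, x p ≠ 0 → d p = c) : diagonal d *ᵥ x = c • x := by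
  funext p
  by_cases hx : x p = 0
  · simp [mulVec_diagonal, hx]
  · simp [mulVec_diagonal, h p hx]

section BlockConstraints

variable {K ι κ : Type*} [Field K]

def blockConstraints (c : κ) (s : Finset κ) : (ι × κ → K) →ₗ[K] (ι → K) × (ι → K) :=
  (LinearMap.pi fun i => LinearMap.proj (i, c)).prod
    (LinearMap.pi fun i => ∑ a ∈ s, LinearMap.proj (i, a))

theorem ker_blockConstraints (c : κ) (s : Finset κ) :
    LinearMap.ker (blockConstraints (K := K) (ι := ι) c s) =
      (⨅ i : ι, LinearMap.ker (LinearMap.proj (i, c) : (ι × κ → K) →ₗ[K] K)) ⊓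
        ⨅ i : ι, LinearMap.ker (∑ a ∈ s, LinearMap.proj (i, a) : (ι × κ → K) →ₗ[K] K) := by
  rw [blockConstraints, LinearMap.ker_prod, LinearMap.ker_pi, LinearMap.ker_pi]

theorem blockConstraints_surjective {c a₀ : κ} {s : Finset κ} (hc : c ∉ s) (ha₀ : a₀ ∈ s) :
    Function.Surjective (blockConstraints (K := K) (ι := ι) c s) := by
  classical
  rintro ⟨u, v⟩
  refine ⟨fun p => if p.2 = c then u p.1 else if p.2 = a₀ then v p.1 else 0, ?_⟩
  have hne : a₀ ≠ c := fun h => hc (h ▸ ha₀)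
  ext i
  · simp [blockConstraints]
  · simp only [blockConstraints, LinearMap.prod_apply, Function.prod_apply, LinearMap.pi_apply,
      LinearMap.coe_sum, LinearMap.coe_proj, Finset.sum_apply, Function.eval]
    rw [Finset.sum_eq_single a₀
      (fun a ha hne' => by simp [hne', ne_of_mem_of_not_mem ha hc]) (absurd ha₀)]
    simp [hne]

theorem finrank_ker_blockConstraints [Fintype ι] [Fintype κ] {c a₀ : κ} {s : Finset κ}
    (hc : c ∉ s) (ha₀ : a₀ ∈ s) :
    Module.finrank K (LinearMap.ker (blockConstraints (K := K) (ι := ι) c s)) =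
      Fintype.card ι * (Fintype.card κ - 2) := by
  classical
  have h := LinearMap.finrank_range_add_finrank_ker (blockConstraints (K := K) (ι := ι) c s)
  rw [LinearMap.range_eq_top.mpr (blockConstraints_surjective hc ha₀), finrank_top] at h
  simp only [Module.finrank_prod, Module.finrank_fintype_fun_eq_card, Fintype.card_prod] at h
  rw [Nat.mul_sub]
  omega

end BlockConstraints

theorem rocAdj_mulVec_of_corner_eq_zero {b q : ℕ} {x : Fin q × Fin b → ℝ}
    (hx : ∀ p : Fin q × Fin b, p.2.val = 0 → x p = 0) :
    rocAdj b q *ᵥ x = fun p => ∑ a, x (p.1, a) - x p := by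
  funext p
  have hterm : ∀ r, rocAdj b q p r * x r = if p.1 = r.1 ∧ p.2 ≠ r.2 then x r else 0 := by
    intro r
    by_cases hr : r.2.val = 0
    · simp [hx r hr]
    · simp [rocAdj, hr, ite_mul]
  simp only [mulVec, dotProduct, hterm, Fintype.sum_prod_type, ite_and, Finset.sum_ite_irrel,
    sum_const_zero, Finset.sum_ite_eq, mem_univ, if_true]
  rw [← Finset.sum_filter, Finset.filter_ne, Finset.sum_erase_eq_sub (mem_univ _)]

theorem rocAhat_mulVec_of_noise {b q : ℕ} (hb : 1 ≤ b) {x : Fin q × Fin b → ℝ}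
    (hcorner : ∀ p : Fin q × Fin b, p.2.val = 0 → x p = 0)
    (hblock : ∀ i : Fin q, ∑ a ∈ univ.filter (fun a : Fin b => a.val ≠ 0), x (i, a) = 0) :
    rocAhat b q *ᵥ x = (-1 / ((b : ℝ) - 1)) • x := by
  set c : ℝ := 1 / Real.sqrt ((b : ℝ) - 1)
  have hscale : ∀ y : Fin q × Fin b → ℝ, (∀ p : Fin q × Fin b, p.2.val = 0 → y p = 0) →
      diagonal (fun p => 1 / Real.sqrt (rocDeg b q p)) *ᵥ y = c • y := fun y hy =>
    diagonal_mulVec_eq_smul fun p hp => by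
      have hinternal : p.2.val ≠ 0 := fun h => hp (hy p h)
      simp [rocDeg, c, hinternal]
  have hadj : rocAdj b q *ᵥ x = -x := by
    rw [rocAdj_mulVec_of_corner_eq_zero hcorner]
    funext p
    have hsum : ∑ a, x (p.1, a) = 0 := by
      rw [← sum_filter_of_ne (p := fun a : Fin b => a.val ≠ 0)
        fun a _ hxa h0 => hxa (hcorner (p.1, a) h0)]
      exact hblock p.1
    simp [hsum]
  have hc : c * c = 1 / ((b : ℝ) - 1) := by
    have : (0 : ℝ) ≤ b - 1 := sub_nonneg.mpr (by exact_mod_cast hb)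
    rw [div_mul_div_comm, one_mul, Real.mul_self_sqrt this]
  calc rocAhat b q *ᵥ x
      = diagonal (fun p => 1 / Real.sqrt (rocDeg b q p)) *ᵥ (rocAdj b q *ᵥ
          (diagonal (fun p => 1 / Real.sqrt (rocDeg b q p)) *ᵥ x)) := by
        rw [rocAhat, ← mulVec_mulVec, ← mulVec_mulVec]
    _ = (c * c) • -x := by
        rw [hscale x hcorner, mulVec_smul, hadj, mulVec_smul,
          hscale (-x) (by simpa using hcorner), smul_smul]
    _ = (-1 / ((b : ℝ) - 1)) • x := by rw [hc, smul_neg, ← neg_smul, neg_div]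

/-- Every vector vanishing on all corner vertices and summing to zero
on the internal vertices of each block is an eigenvector of `Â` for the eigenvalue
`−1/(b−1)`; the subspace of all such vectors has dimension `n − 2q = q(b−2)`.
In particular `−1/(b−1)` is an eigenvalue of `Â` of multiplicity at least `n − 2q`. -/
theorem roc_noise_eigenspace (b q : ℕ) (hb : 3 ≤ b) :
    (∀ x : Fin q × Fin b → ℝ,
        (∀ (i : Fin q) (a : Fin b), a.val = 0 → x (i, a) = 0) →
        (∀ i : Fin q, ∑ a ∈ Finset.univ.filter (fun a : Fin b => a.val ≠ 0), x (i, a) = 0) →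
        (rocAhat b q).mulVec x = (-(1 : ℝ) / ((b : ℝ) - 1)) • x) ∧
    Module.finrank ℝ
      ↥((⨅ i : Fin q, LinearMap.ker
          ((LinearMap.proj (i, (⟨0, by omega⟩ : Fin b)) : ((Fin q × Fin b) → ℝ) →ₗ[ℝ] ℝ))) ⊓
       (⨅ i : Fin q, LinearMap.ker
          (∑ a ∈ Finset.univ.filter (fun a : Fin b => a.val ≠ 0),
            (LinearMap.proj (i, a) : ((Fin q × Fin b) → ℝ) →ₗ[ℝ] ℝ)))) = q * (b - 2) := by
  refine ⟨fun x hcorner hblock =>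
    rocAhat_mulVec_of_noise (by omega) (fun p => hcorner p.1 p.2) hblock, ?_⟩
  have hcorner : (⟨0, by omega⟩ : Fin b) ∉ univ.filter (fun a : Fin b => a.val ≠ 0) := by simp
  have hinternal : (⟨1, by omega⟩ : Fin b) ∈ univ.filter (fun a : Fin b => a.val ≠ 0) := by simp
  rw [← ker_blockConstraints, finrank_ker_blockConstraints hcorner hinternal, Fintype.card_fin,
    Fintype.card_fin]
end

section
/- For the ring of cliques R_{b,q} with b ≥ 3, q ≥ 3, the vectors v₁⁽⁰⁾ = √(b+1)·(1_q ⊗ e₁) + √(b−1)·(1_q ⊗ g₁) and v₂⁽⁰⁾ = (b−1)^{3/2}·(1_q ⊗ e₁) − √(b+1)·(1_q ⊗ g₁) satisfy Â v₁⁽⁰⁾ = λ₁⁽⁰⁾ v₁⁽⁰⁾ and Â v₂⁽⁰⁾ = λ₂⁽⁰⁾ v₂⁽⁰⁾. -/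
open Matrix Finset

/-- `α_k = 2 cos(2πk/q)`. -/
noncomputable def rocAlpha (q k : ℕ) : ℝ := 2 * Real.cos (2 * Real.pi * k / q)

/-- `β_k = (1/2)(α_k √((b−1)/(b+1)) − √(b²−1) + √((b+1)/(b−1)))`. -/
noncomputable def rocBeta (b q k : ℕ) : ℝ :=
  (1 / 2) * (rocAlpha q k * Real.sqrt (((b : ℝ) - 1) / ((b : ℝ) + 1)) -
    Real.sqrt ((b : ℝ) ^ 2 - 1) + Real.sqrt (((b : ℝ) + 1) / ((b : ℝ) - 1)))

/-- `ξ₁⁽ᵏ⁾ = β_k + √(β_k² + (b−1))`. -/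
noncomputable def rocXi1 (b q k : ℕ) : ℝ :=
  rocBeta b q k + Real.sqrt ((rocBeta b q k) ^ 2 + ((b : ℝ) - 1))

/-- `ξ₂⁽ᵏ⁾ = β_k − √(β_k² + (b−1))`. -/
noncomputable def rocXi2 (b q k : ℕ) : ℝ :=
  rocBeta b q k - Real.sqrt ((rocBeta b q k) ^ 2 + ((b : ℝ) - 1))

/-- `λ₁⁽ᵏ⁾ = ξ₁⁽ᵏ⁾/√(b²−1) + 1 − 1/(b−1)`. -/
noncomputable def rocLam1 (b q k : ℕ) : ℝ :=
  rocXi1 b q k / Real.sqrt ((b : ℝ) ^ 2 - 1) + 1 - 1 / ((b : ℝ) - 1)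

/-- `λ₂⁽ᵏ⁾ = ξ₂⁽ᵏ⁾/√(b²−1) + 1 − 1/(b−1)`. -/
noncomputable def rocLam2 (b q k : ℕ) : ℝ :=
  rocXi2 b q k / Real.sqrt ((b : ℝ) ^ 2 - 1) + 1 - 1 / ((b : ℝ) - 1)


/-!
Vectors of the form `1_q ⊗ (x e₁ + y g₁)` span an `Â`-invariant plane: a corner has `b − 1`
neighbours in its clique and two on the cycle (distinct because `q ≥ 3`), an internal vertex has
one corner and `b − 2` internal neighbours. On this plane `Â` acts by a `2 × 2` matrix. For `k = 0`
the radicand `β₀² + (b − 1)` is the square of `√((b+1)/(b−1)) − β₀`, which gives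
`λ₁⁽⁰⁾ = 1` and `λ₂⁽⁰⁾ = 2/(b+1) − 1/(b−1)`.
-/

/-- The vector `1_q ⊗ (x e₁ + y g₁)`. -/
noncomputable def rocCornerVec (b q : ℕ) (x y : ℝ) : Fin q × Fin b → ℝ :=
  fun p => if p.2.val = 0 then x else y

lemma card_filter_cycle_adj {q : ℕ} (hq : 3 ≤ q) (i : Fin q) :
    #{j : Fin q | (i.val + 1) % q = j.val ∨ (j.val + 1) % q = i.val} = 2 := by
  have succ_mod : ∀ x < q, (x + 1) % q = if x + 1 = q then 0 else x + 1 := by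
    intro x hx
    split_ifs with h
    · rw [h, Nat.mod_self]
    · exact Nat.mod_eq_of_lt (by omega)
  have hi := i.isLt
  rw [card_eq_two]
  refine ⟨⟨(i.val + 1) % q, Nat.mod_lt _ (by omega)⟩,
    ⟨if i.val = 0 then q - 1 else i.val - 1, by split_ifs <;> omega⟩, ?_, ?_⟩
  · simp only [Ne, Fin.ext_iff, succ_mod _ hi]
    split_ifs <;> omega
  · ext j
    have hj := j.isLt
    simp only [mem_filter, mem_univ, true_and, mem_insert, mem_singleton, Fin.ext_iff,
      succ_mod _ hi, succ_mod _ hj]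
    split_ifs <;> omega

lemma sum_fin_ite_val_eq_zero {R : Type*} [NonAssocSemiring R] (n : ℕ) (x y : R) :
    ∑ a : Fin (n + 1), (if a.val = 0 then x else y) = x + n * y := by
  simp [Fin.sum_univ_succ]

lemma diagonal_rocCornerVec_mulVec (b q : ℕ) (c d x y : ℝ) :
    diagonal (rocCornerVec b q c d) *ᵥ rocCornerVec b q x y = rocCornerVec b q (c * x) (d * y) := by
  ext p
  simp only [mulVec_diagonal, rocCornerVec]
  split_ifs <;> rfl

lemma smul_rocCornerVec (b q : ℕ) (c x y : ℝ) :
    c • rocCornerVec b q x y = rocCornerVec b q (c * x) (c * y) := by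
  ext p
  simp only [Pi.smul_apply, smul_eq_mul, rocCornerVec]
  split_ifs <;> rfl

section

variable {b : ℕ}

local notation "s" => √((b : ℝ) + 1)
local notation "t" => √((b : ℝ) - 1)

lemma rocAdj_mulVec_rocCornerVec {q : ℕ} (hq : 3 ≤ q) (x y : ℝ) :
    rocAdj b q *ᵥ rocCornerVec b q x y =
      rocCornerVec b q (2 * x + ((b : ℝ) - 1) * y) (x + ((b : ℝ) - 2) * y) := by
  ext ⟨i, a⟩
  obtain ⟨n, rfl⟩ : ∃ n, b = n + 1 := Nat.exists_eq_add_one.mpr a.pos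
  have clique_part : ∑ j, ∑ a', (if i = j ∧ a ≠ a' then rocCornerVec (n + 1) q x y (j, a') else 0)
      = x + n * y - rocCornerVec (n + 1) q x y (i, a) := by
    simp only [ite_and, ← ite_sum_zero, sum_ite_eq, mem_univ, if_true]
    rw [← sum_filter, filter_ne, sum_erase_eq_sub (mem_univ a)]
    simp only [rocCornerVec, sum_fin_ite_val_eq_zero]
  have cycle_part : ∑ j, ∑ a', (if ((i.val + 1) % q = j.val ∨ (j.val + 1) % q = i.val) ∧
      a.val = 0 ∧ a'.val = 0 then rocCornerVec (n + 1) q x y (j, a') else 0)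
      = if a.val = 0 then 2 * x else 0 := by
    split_ifs with ha
    · simp only [ha, true_and, ite_and, ← ite_sum_zero]
      have corner_sum : ∀ j, ∑ a' : Fin (n + 1),
          (if a'.val = 0 then rocCornerVec (n + 1) q x y (j, a') else 0) = x := by
        intro j
        simp [rocCornerVec]
      rw [sum_congr rfl fun j _ => by rw [corner_sum j], ← sum_filter, sum_const,
        card_filter_cycle_adj hq, nsmul_eq_mul, Nat.cast_ofNat]
    · simp [ha]
  simp only [mulVec, dotProduct, rocAdj, of_apply, add_mul, ite_mul, one_mul, zero_mul,
    sum_add_distrib, Fintype.sum_prod_type, clique_part, cycle_part]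
  simp only [rocCornerVec]
  split_ifs <;> push_cast <;> ring

lemma rocAhat_mulVec_rocCornerVec {q : ℕ} (hq : 3 ≤ q) (x y : ℝ) :
    rocAhat b q *ᵥ rocCornerVec b q x y =
      rocCornerVec b q ((2 * (x / s) + ((b : ℝ) - 1) * (y / t)) / s)
        ((x / s + ((b : ℝ) - 2) * (y / t)) / t) := by
  have inv_sqrt_rocDeg : (fun p => 1 / √(rocDeg b q p)) = rocCornerVec b q (1 / s) (1 / t) := by
    ext p
    simp only [rocDeg, rocCornerVec]
    split_ifs <;> rfl
  simp only [rocAhat, inv_sqrt_rocDeg, ← mulVec_mulVec, diagonal_rocCornerVec_mulVec,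
    rocAdj_mulVec_rocCornerVec hq]
  congr 1 <;> ring

variable (q : ℕ) (hb : 1 < b)
include hb

lemma rocBeta_zero : rocBeta b q 0 = (2 * (t / s) - s * t + s / t) / 2 := by
  have hb' : (1 : ℝ) < b := by exact_mod_cast hb
  rw [rocBeta, rocAlpha, Real.sqrt_div (by linarith), Real.sqrt_div (by linarith),
    show (b : ℝ) ^ 2 - 1 = (b + 1) * (b - 1) by ring, Real.sqrt_mul (by linarith)]
  simp only [CharP.cast_eq_zero, mul_zero, zero_div, Real.cos_zero]
  ring

lemma sqrt_rocBeta_zero_sq_add : √(rocBeta b q 0 ^ 2 + ((b : ℝ) - 1)) = s / t - rocBeta b q 0 := by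
  have hb' : (1 : ℝ) < b := by exact_mod_cast hb
  have ht : 0 < t := Real.sqrt_pos.2 (by linarith)
  have hs2 : s ^ 2 = b + 1 := Real.sq_sqrt (by linarith)
  have ht2 : t ^ 2 = b - 1 := Real.sq_sqrt (by linarith)
  have gap : s / t - rocBeta b q 0 = ((b : ℝ) ^ 2 - b + 2) / (2 * s * t) := by
    rw [rocBeta_zero q hb]
    field_simp
    linear_combination (t ^ 2 + 1) * hs2 + ((b : ℝ) - 1) * ht2
  have gap_pos : 0 < s / t - rocBeta b q 0 := by
    rw [gap]
    exact div_pos (by nlinarith) (by positivity)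
  rw [Real.sqrt_eq_iff_mul_self_eq_of_pos gap_pos, rocBeta_zero q hb]
  field_simp
  linear_combination 4 * s ^ 2 * t ^ 2 * hs2

lemma rocLam1_zero : rocLam1 b q 0 = 1 := by
  have hb' : (1 : ℝ) < b := by exact_mod_cast hb
  have ht : 0 < t := Real.sqrt_pos.2 (by linarith)
  have ht2 : t ^ 2 = b - 1 := Real.sq_sqrt (by linarith)
  have hb1 : (b : ℝ) - 1 ≠ 0 := by linarith
  rw [rocLam1, rocXi1, sqrt_rocBeta_zero_sq_add q hb,
    show (b : ℝ) ^ 2 - 1 = (b + 1) * (b - 1) by ring, Real.sqrt_mul (by linarith)]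
  field_simp
  linear_combination (-s) * ht2

lemma rocLam2_zero : rocLam2 b q 0 = 2 / ((b : ℝ) + 1) - 1 / ((b : ℝ) - 1) := by
  have hb' : (1 : ℝ) < b := by exact_mod_cast hb
  have ht : 0 < t := Real.sqrt_pos.2 (by linarith)
  have hs2 : s ^ 2 = b + 1 := Real.sq_sqrt (by linarith)
  have hb1 : (b : ℝ) - 1 ≠ 0 := by linarith
  rw [rocLam2, rocXi2, sqrt_rocBeta_zero_sq_add q hb, rocBeta_zero q hb,
    show (b : ℝ) ^ 2 - 1 = (b + 1) * (b - 1) by ring, Real.sqrt_mul (by linarith)]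
  field_simp
  linear_combination (-4 * t ^ 2 * ((b : ℝ) - 1)) * hs2

end

/-- The (unnormalized) eigenvectors of `Â` associated with the
`k = 0` eigenvalues `λ₁⁽⁰⁾, λ₂⁽⁰⁾`:
`v₁⁽⁰⁾ = √(b+1)(1_q ⊗ e₁) + √(b−1)(1_q ⊗ g₁)` and
`v₂⁽⁰⁾ = (b−1)^{3/2}(1_q ⊗ e₁) − √(b+1)(1_q ⊗ g₁)`. -/
theorem roc_k0_eigenpairs (b q : ℕ) (hb : 3 ≤ b) (hq : 3 ≤ q) :
    (rocAhat b q).mulVec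
        (fun p : Fin q × Fin b =>
          Real.sqrt ((b : ℝ) + 1) * (if p.2.val = 0 then 1 else 0) +
          Real.sqrt ((b : ℝ) - 1) * (if p.2.val = 0 then 0 else 1)) =
      rocLam1 b q 0 •
        (fun p : Fin q × Fin b =>
          Real.sqrt ((b : ℝ) + 1) * (if p.2.val = 0 then 1 else 0) +
          Real.sqrt ((b : ℝ) - 1) * (if p.2.val = 0 then 0 else 1)) ∧
    (rocAhat b q).mulVec
        (fun p : Fin q × Fin b =>
          ((b : ℝ) - 1) ^ ((3 : ℝ) / 2) * (if p.2.val = 0 then 1 else 0) -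
          Real.sqrt ((b : ℝ) + 1) * (if p.2.val = 0 then 0 else 1)) =
      rocLam2 b q 0 •
        (fun p : Fin q × Fin b =>
          ((b : ℝ) - 1) ^ ((3 : ℝ) / 2) * (if p.2.val = 0 then 1 else 0) -
          Real.sqrt ((b : ℝ) + 1) * (if p.2.val = 0 then 0 else 1)) := by
  have hb' : (3 : ℝ) ≤ b := by exact_mod_cast hb
  have ht : 0 < √((b : ℝ) - 1) := Real.sqrt_pos.2 (by linarith)
  have hb1 : (b : ℝ) - 1 ≠ 0 := by linarith
  have hs2 : √((b : ℝ) + 1) ^ 2 = b + 1 := Real.sq_sqrt (by linarith)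
  have ht2 : √((b : ℝ) - 1) ^ 2 = b - 1 := Real.sq_sqrt (by linarith)
  have rpow_three_halves : ((b : ℝ) - 1) ^ ((3 : ℝ) / 2) = ((b : ℝ) - 1) * √((b : ℝ) - 1) := by
    rw [show (3 : ℝ) / 2 = 1 + 1 / 2 by norm_num, Real.rpow_add (by linarith), Real.rpow_one,
      ← Real.sqrt_eq_rpow]
  have eq_rocCornerVec : ∀ x y : ℝ, (fun p : Fin q × Fin b =>
      x * (if p.2.val = 0 then 1 else 0) + y * (if p.2.val = 0 then 0 else 1)) =
      rocCornerVec b q x y := by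
    intro x y
    ext p
    simp only [rocCornerVec]
    split_ifs <;> ring
  simp only [sub_eq_add_neg _ (√((b : ℝ) + 1) * _), ← neg_mul, eq_rocCornerVec,
    rocAhat_mulVec_rocCornerVec hq, smul_rocCornerVec, rocLam1_zero q (by omega : 1 < b),
    rocLam2_zero q (by omega : 1 < b), rpow_three_halves]
  refine ⟨?_, ?_⟩ <;> congr 1 <;> field_simp <;> simp only [hs2, ht2] <;> ring
end

section
/- For the ring of cliques R_{b,q} with b ≥ 3, q ≥ 3, and for each k = 1, …, ⌈q/2⌉ − 1, the four vectors c^{k,q} ⊗ (ξ₁⁽ᵏ⁾ e₁ + g₁), s^{k,q} ⊗ (ξ₁⁽ᵏ⁾ e₁ + g₁), c^{k,q} ⊗ (ξ₂⁽ᵏ⁾ e₁ + g₁), s^{k,q} ⊗ (ξ₂⁽ᵏ⁾ e₁ + g₁) are nonzero and satisfy Â(c^{k,q} ⊗ (ξ_i⁽ᵏ⁾ e₁ + g₁)) = λ_i⁽ᵏ⁾ · (c^{k,q} ⊗ (ξ_i⁽ᵏ⁾ e₁ + g₁)) and Â(s^{k,q} ⊗ (ξ_i⁽ᵏ⁾ e₁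 + g₁)) = λ_i⁽ᵏ⁾ · (s^{k,q} ⊗ (ξ_i⁽ᵏ⁾ e₁ + g₁)) for i = 1, 2. -/
open Matrix Finset

/-- Periodic cosine vector `c^{k,q}_j = cos(2πkj/q)`, `j = 1, …, q`. -/
noncomputable def cvec (q k : ℕ) : Fin q → ℝ :=
  fun j => Real.cos (2 * Real.pi * k * (j.val + 1) / q)

/-- Periodic sine vector `s^{k,q}_j = sin(2πkj/q)`, `j = 1, …, q`. -/
noncomputable def svec (q k : ℕ) : Fin q → ℝ :=
  fun j => Real.sin (2 * Real.pi * k * (j.val + 1) / q)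

/-- Block vector `ξ e₁ + g₁ ∈ ℝ^b`. -/
noncomputable def blockVec (b : ℕ) (ξ : ℝ) : Fin b → ℝ :=
  fun a => if a.val = 0 then ξ else 1

/-- Kronecker (tensor) product of vectors: `(y ⊗ z)_{(i,a)} = y_i z_a`. -/
noncomputable def vkron {q b : ℕ} (y : Fin q → ℝ) (z : Fin b → ℝ) : Fin q × Fin b → ℝ :=
  fun p => y p.1 * z p.2

/-!
If `y ∈ ℝ^q` satisfies `y_{i+1} + y_{i-1} = α y_i` cyclically, as `c^{k,q}` and `s^{k,q}` do with
`α = α_k`, then `A (y ⊗ z) = y ⊗ ((J - I + α e₁e₁ᵀ) z)`, and since `D` only depends on the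
position inside a block, the eigenproblem for `Â` on `y ⊗ (ξ e₁ + g₁)` collapses to two scalar
equations: the equation at the internal vertices determines `λ = ξ/√(b²-1) + 1 - 1/(b-1)`, and
with this `λ` the equation at the corner becomes `ξ² = 2 β_k ξ + (b - 1)`, whose roots are
`ξ₁⁽ᵏ⁾` and `ξ₂⁽ᵏ⁾`. The vectors are nonzero because `c^{k,q}_q = 1` and `s^{k,q}_1 > 0`
for `0 < 2k < q`.
-/

theorem val_finRotate (q : ℕ) (i : Fin q) : (finRotate q i : ℕ) = (i + 1) % q := by
  have := i.neZero
  rw [finRotate_apply, Fin.val_add, Fin.val_one', Nat.add_mod_mod]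

theorem val_finRotate_symm (q : ℕ) (i : Fin q) :
    ((finRotate q).symm i : ℕ) = if (i : ℕ) = 0 then q - 1 else i - 1 := by
  obtain ⟨n, rfl⟩ : ∃ n, q = n + 1 := Nat.exists_eq_add_one.mpr i.pos
  rw [finRotate_symm_apply, Fin.coe_sub_one]
  simp only [Fin.ext_iff, Fin.val_zero, Nat.add_sub_cancel]

theorem finRotate_ne_symm {q : ℕ} (hq : 3 ≤ q) (i : Fin q) :
    finRotate q i ≠ (finRotate q).symm i := by
  rw [Ne, Fin.ext_iff, val_finRotate, val_finRotate_symm]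
  have := i.isLt
  rcases Nat.lt_or_ge (i + 1) q with h | h
  · rw [Nat.mod_eq_of_lt h]; split <;> omega
  · rw [show (i : ℕ) + 1 = q by omega, Nat.mod_self]; split <;> omega

theorem add_finRotate_symm_of_periodic {R : Type*} [Semiring R] {q : ℕ} {g : ℕ → R}
    {α : R} (hg : Function.Periodic g q) (hrec : ∀ n, g (n + 2) + g n = α * g (n + 1))
    (i : Fin q) : g (finRotate q i) + g ((finRotate q).symm i) = α * g i := by
  rw [val_finRotate, hg.map_mod_nat, val_finRotate_symm]
  split_ifs with hi
  · have h := hrec (q - 1)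
    rw [show q - 1 + 2 = 1 + q by omega, show q - 1 + 1 = 0 + q by omega, hg, hg] at h
    rwa [hi, zero_add]
  · have h := hrec (i - 1)
    rwa [show (i : ℕ) - 1 + 2 = i + 1 by omega, show (i : ℕ) - 1 + 1 = i by omega] at h

theorem rocAdj_mulVec_apply {b q : ℕ} (hq : 3 ≤ q) (v : Fin q × Fin b → ℝ) (i : Fin q)
    (a : Fin b) :
    (rocAdj b q *ᵥ v) (i, a) = (∑ c, v (i, c)) - v (i, a) +
      if (a : ℕ) = 0 then v (finRotate q i, a) + v ((finRotate q).symm i, a) else 0 := by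
  have hcyc : ∀ j : Fin q, ((i : ℕ) + 1) % q = j ∨ ((j : ℕ) + 1) % q = i ↔
      j = finRotate q i ∨ j = (finRotate q).symm i := by
    intro j
    rw [← val_finRotate, ← val_finRotate, ← Fin.ext_iff, ← Fin.ext_iff, eq_comm,
      Equiv.eq_symm_apply]
  simp only [mulVec, dotProduct, rocAdj, of_apply, add_mul, sum_add_distrib,
    Fintype.sum_prod_type]
  congr 1
  · rw [sum_eq_single i (fun j _ hj => sum_eq_zero fun c _ => by simp [Ne.symm hj]) (by simp)]
    simp only [true_and, ite_mul, one_mul, zero_mul]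
    rw [← sum_filter, filter_ne, sum_erase_eq_sub (mem_univ a)]
  · split_ifs with ha
    · have hc : ∀ c : Fin b, (c : ℕ) = 0 ↔ c = a := fun c => by rw [Fin.ext_iff, ha]
      simp only [hcyc, ha, hc, true_and, ite_and, ite_mul, one_mul, zero_mul]
      simp only [sum_ite_irrel, sum_const_zero, sum_ite_eq', mem_univ, if_true]
      rw [← sum_filter, ← sum_pair (f := fun x => v (x, a)) (finRotate_ne_symm hq i)]
      congr 1
      ext x
      simp
    · simp [ha]

theorem sum_fin_ite_val_eq_zero_s8 {b : ℕ} (hb : 0 < b) (P Q : ℝ) :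
    ∑ c : Fin b, (if (c : ℕ) = 0 then P else Q) = P + ((b : ℝ) - 1) * Q := by
  obtain ⟨n, rfl⟩ : ∃ n, b = n + 1 := Nat.exists_eq_add_one.mpr hb
  simp [Fin.sum_univ_succ]

theorem rocAdj_mulVec_vkron {b q : ℕ} (hq : 3 ≤ q) {y : Fin q → ℝ} {α : ℝ}
    (hy : ∀ i, y (finRotate q i) + y ((finRotate q).symm i) = α * y i) (z : Fin b → ℝ) :
    rocAdj b q *ᵥ vkron y z =
      vkron y fun a => (∑ c, z c) - z a + if (a : ℕ) = 0 then α * z a else 0 := by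
  funext ⟨i, a⟩
  rw [rocAdj_mulVec_apply hq]
  simp only [vkron, ← mul_sum]
  split_ifs
  · rw [← add_mul, hy]; ring
  · ring

theorem diagonal_snd_mulVec_vkron {b q : ℕ} (δ : Fin b → ℝ) (y : Fin q → ℝ) (z : Fin b → ℝ) :
    diagonal (fun p : Fin q × Fin b => δ p.2) *ᵥ vkron y z = vkron y (δ * z) := by
  funext ⟨i, a⟩
  simp only [mulVec_diagonal, vkron, Pi.mul_apply]
  ring

theorem rocAhat_mulVec_vkron_blockVec {b q : ℕ} (hb : 0 < b) (hq : 3 ≤ q) {y : Fin q → ℝ}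
    {α : ℝ} (hy : ∀ i, y (finRotate q i) + y ((finRotate q).symm i) = α * y i) (ξ : ℝ) :
    rocAhat b q *ᵥ vkron y (blockVec b ξ) = vkron y fun a =>
      if (a : ℕ) = 0 then 1 / √((b : ℝ) + 1) * ((b - 1) / √(b - 1) + α * ξ / √(b + 1))
      else 1 / √((b : ℝ) - 1) * (ξ / √(b + 1) + (b - 2) / √(b - 1)) := by
  set δ : Fin b → ℝ := fun a => 1 / √(if (a : ℕ) = 0 then (b : ℝ) + 1 else b - 1)
  have hD : diagonal (fun p : Fin q × Fin b => 1 / √(rocDeg b q p)) = diagonal fun p => δ p.2 :=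
    rfl
  have hδξ : δ * blockVec b ξ =
      fun a : Fin b => if (a : ℕ) = 0 then ξ / √((b : ℝ) + 1) else 1 / √(b - 1) := by
    funext a
    simp only [δ, blockVec, Pi.mul_apply]
    split_ifs <;> ring
  rw [rocAhat, ← mulVec_mulVec, ← mulVec_mulVec, hD, diagonal_snd_mulVec_vkron,
    rocAdj_mulVec_vkron hq hy, diagonal_snd_mulVec_vkron, hδξ, sum_fin_ite_val_eq_zero_s8 hb]
  congr 1
  funext a
  simp only [δ, Pi.mul_apply]
  split_ifs <;> ring

theorem sqrt_sq_sub_one {x : ℝ} (hx : -1 ≤ x) : √(x ^ 2 - 1) = √(x + 1) * √(x - 1) := by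
  rw [← Real.sqrt_mul (by linarith)]
  ring_nf

theorem two_mul_rocBeta_mul_sqrt {b : ℕ} (hb : 2 ≤ b) (q k : ℕ) :
    2 * rocBeta b q k * √((b : ℝ) ^ 2 - 1) = (b - 1) * rocAlpha q k - (b - 2) * (b + 1) := by
  have hb' : (2 : ℝ) ≤ b := by exact_mod_cast hb
  have hu : √((b : ℝ) + 1) ^ 2 = b + 1 := Real.sq_sqrt (by linarith)
  have hv : √((b : ℝ) - 1) ^ 2 = b - 1 := Real.sq_sqrt (by linarith)
  have hu0 : √((b : ℝ) + 1) ≠ 0 := Real.sqrt_ne_zero'.mpr (by linarith)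
  have hv0 : √((b : ℝ) - 1) ≠ 0 := Real.sqrt_ne_zero'.mpr (by linarith)
  rw [rocBeta, Real.sqrt_div' _ (by linarith), Real.sqrt_div' _ (by linarith),
    sqrt_sq_sub_one (by linarith)]
  field_simp
  linear_combination (rocAlpha q k - √((b : ℝ) + 1) ^ 2) * hv + (2 - b) * hu

theorem sq_eq_two_mul_add_of_sq_eq {β c s : ℝ} (hs : s ^ 2 = β ^ 2 + c) :
    (β + s) ^ 2 = 2 * β * (β + s) + c := by
  linear_combination hs

theorem rocAhat_mulVec_vkron_blockVec_of_sq_eq {b q k : ℕ} (hb : 2 ≤ b) (hq : 3 ≤ q)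
    {y : Fin q → ℝ} (hy : ∀ i, y (finRotate q i) + y ((finRotate q).symm i) = rocAlpha q k * y i)
    {ξ : ℝ} (hξ : ξ ^ 2 = 2 * rocBeta b q k * ξ + (b - 1)) :
    rocAhat b q *ᵥ vkron y (blockVec b ξ) =
      (ξ / √((b : ℝ) ^ 2 - 1) + 1 - 1 / ((b : ℝ) - 1)) • vkron y (blockVec b ξ) := by
  have hb' : (2 : ℝ) ≤ b := by exact_mod_cast hb
  have hβ := two_mul_rocBeta_mul_sqrt hb q k
  rw [sqrt_sq_sub_one (by linarith)] at hβ
  rw [rocAhat_mulVec_vkron_blockVec (by omega) hq hy, sqrt_sq_sub_one (by linarith)]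
  set u := √((b : ℝ) + 1)
  set v := √((b : ℝ) - 1)
  have hu : u ^ 2 = b + 1 := Real.sq_sqrt (by linarith)
  have hv : v ^ 2 = b - 1 := Real.sq_sqrt (by linarith)
  have hu0 : u ≠ 0 := Real.sqrt_ne_zero'.mpr (by linarith)
  have hv0 : v ≠ 0 := Real.sqrt_ne_zero'.mpr (by linarith)
  have hb1 : (b : ℝ) - 1 ≠ 0 := by linarith
  funext ⟨i, a⟩
  simp only [vkron, blockVec, Pi.smul_apply, smul_eq_mul]
  split_ifs
  · field_simp
    apply mul_left_cancel₀ hv0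
    linear_combination (-(y i) * u * (b - 1) * v) * hξ + (-(y i) * (b - 1) * ξ) * hβ +
      (y i * ξ * ((b - 1) * rocAlpha q k - (b - 2) * u ^ 2)) * hv -
      (y i * (b - 2) * ξ * (b - 1)) * hu
  · field_simp
    linear_combination (-(y i) * u * (b - 2)) * hv

open Real in
theorem add_finRotate_symm_of_two_cos_rule {f : ℝ → ℝ} (hper : Function.Periodic f (2 * π))
    (hrule : ∀ x θ, f (x + θ) + f (x - θ) = 2 * cos θ * f x) (q k : ℕ) (i : Fin q) :
    f (2 * π * k * ((finRotate q i : ℕ) + 1) / q) +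
      f (2 * π * k * (((finRotate q).symm i : ℕ) + 1) / q) =
      rocAlpha q k * f (2 * π * k * ((i : ℕ) + 1) / q) := by
  have hq : (q : ℝ) ≠ 0 := Nat.cast_ne_zero.mpr i.pos.ne'
  refine add_finRotate_symm_of_periodic (g := fun n : ℕ => f (2 * π * k * (n + 1) / q))
    (fun n => ?_) (fun n => ?_) i
  · dsimp only
    rw [← (hper.nat_mul k) (2 * π * k * (n + 1) / q)]
    congr 1
    field_simp
    push_cast
    ring
  · rw [rocAlpha, ← hrule]
    congr 2 <;> field_simp <;> push_cast <;> ring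

theorem cvec_add_finRotate_symm (q k : ℕ) (i : Fin q) :
    cvec q k (finRotate q i) + cvec q k ((finRotate q).symm i) = rocAlpha q k * cvec q k i :=
  add_finRotate_symm_of_two_cos_rule Real.cos_periodic
    (fun x θ => by rw [Real.cos_add, Real.cos_sub]; ring) q k i

theorem svec_add_finRotate_symm (q k : ℕ) (i : Fin q) :
    svec q k (finRotate q i) + svec q k ((finRotate q).symm i) = rocAlpha q k * svec q k i :=
  add_finRotate_symm_of_two_cos_rule Real.sin_periodic
    (fun x θ => by rw [Real.sin_add, Real.sin_sub]; ring) q k i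

theorem vkron_ne_zero {q b : ℕ} {y : Fin q → ℝ} {z : Fin b → ℝ} (hy : y ≠ 0) (hz : z ≠ 0) :
    vkron y z ≠ 0 := by
  obtain ⟨i, hi⟩ := Function.ne_iff.mp hy
  obtain ⟨a, ha⟩ := Function.ne_iff.mp hz
  exact Function.ne_iff.mpr ⟨(i, a), mul_ne_zero hi ha⟩

theorem blockVec_ne_zero {b : ℕ} (hb : 2 ≤ b) (ξ : ℝ) : blockVec b ξ ≠ 0 :=
  Function.ne_iff.mpr ⟨⟨1, hb⟩, by simp [blockVec]⟩

theorem cvec_ne_zero {q : ℕ} (hq : 0 < q) (k : ℕ) : cvec q k ≠ 0 := by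
  refine Function.ne_iff.mpr ⟨⟨q - 1, by omega⟩, ?_⟩
  have hq' : (q : ℝ) ≠ 0 := by positivity
  simp only [cvec, Nat.cast_pred hq, sub_add_cancel, Pi.zero_apply]
  rw [show 2 * Real.pi * k * q / q = k * (2 * Real.pi) by field_simp, Real.cos_nat_mul_two_pi]
  exact one_ne_zero

theorem svec_ne_zero {q k : ℕ} (hk : 0 < k) (hkq : 2 * k < q) : svec q k ≠ 0 := by
  refine Function.ne_iff.mpr ⟨⟨0, by omega⟩, ?_⟩
  have hk' : (0 : ℝ) < k := by exact_mod_cast hk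
  have hkq' : 2 * (k : ℝ) < q := by exact_mod_cast hkq
  have hq' : (0 : ℝ) < q := by linarith
  simp only [svec, Nat.cast_zero, zero_add, mul_one, Pi.zero_apply]
  refine (Real.sin_pos_of_pos_of_lt_pi (by positivity) ?_).ne'
  rw [div_lt_iff₀ hq']
  nlinarith [Real.pi_pos]

theorem rocXi1_sq {b : ℕ} (hb : 1 ≤ b) (q k : ℕ) :
    rocXi1 b q k ^ 2 = 2 * rocBeta b q k * rocXi1 b q k + (b - 1) := by
  have hb' : (1 : ℝ) ≤ b := by exact_mod_cast hb
  exact sq_eq_two_mul_add_of_sq_eq (Real.sq_sqrt (by positivity))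

theorem rocXi2_sq {b : ℕ} (hb : 1 ≤ b) (q k : ℕ) :
    rocXi2 b q k ^ 2 = 2 * rocBeta b q k * rocXi2 b q k + (b - 1) := by
  have hb' : (1 : ℝ) ≤ b := by exact_mod_cast hb
  rw [rocXi2, sub_eq_add_neg]
  exact sq_eq_two_mul_add_of_sq_eq (by rw [neg_sq, Real.sq_sqrt (by positivity)])

/-- For `k = 1, …, ⌈q/2⌉ − 1`, the four vectors
`c^{k,q} ⊗ (ξᵢ⁽ᵏ⁾e₁ + g₁)` and `s^{k,q} ⊗ (ξᵢ⁽ᵏ⁾e₁ + g₁)` (`i = 1, 2`) are nonzero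
eigenvectors of `Â` for the eigenvalues `λᵢ⁽ᵏ⁾`. -/
theorem roc_interior_signal_eigenpairs (b q : ℕ) (hb : 3 ≤ b) (hq : 3 ≤ q)
    (k : ℕ) (hk1 : 1 ≤ k) (hk2 : k ≤ (q + 1) / 2 - 1) :
    (vkron (cvec q k) (blockVec b (rocXi1 b q k)) ≠ 0 ∧
     vkron (svec q k) (blockVec b (rocXi1 b q k)) ≠ 0 ∧
     vkron (cvec q k) (blockVec b (rocXi2 b q k)) ≠ 0 ∧
     vkron (svec q k) (blockVec b (rocXi2 b q k)) ≠ 0) ∧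
    (rocAhat b q).mulVec (vkron (cvec q k) (blockVec b (rocXi1 b q k))) =
      rocLam1 b q k • vkron (cvec q k) (blockVec b (rocXi1 b q k)) ∧
    (rocAhat b q).mulVec (vkron (svec q k) (blockVec b (rocXi1 b q k))) =
      rocLam1 b q k • vkron (svec q k) (blockVec b (rocXi1 b q k)) ∧
    (rocAhat b q).mulVec (vkron (cvec q k) (blockVec b (rocXi2 b q k))) =
      rocLam2 b q k • vkron (cvec q k) (blockVec b (rocXi2 b q k)) ∧
    (rocAhat b q).mulVec (vkron (svec q k) (blockVec b (rocXi2 b q k))) =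
      rocLam2 b q k • vkron (svec q k) (blockVec b (rocXi2 b q k)) := by
  have hb2 : 2 ≤ b := by omega
  have hc := cvec_ne_zero (by omega : 0 < q) k
  have hs := svec_ne_zero hk1 (by omega : 2 * k < q)
  refine ⟨⟨vkron_ne_zero hc (blockVec_ne_zero hb2 _), vkron_ne_zero hs (blockVec_ne_zero hb2 _),
      vkron_ne_zero hc (blockVec_ne_zero hb2 _), vkron_ne_zero hs (blockVec_ne_zero hb2 _)⟩,
    ?_, ?_, ?_, ?_⟩
  · exact rocAhat_mulVec_vkron_blockVec_of_sq_eq hb2 hq (cvec_add_finRotate_symm q k)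
      (rocXi1_sq (by omega) q k)
  · exact rocAhat_mulVec_vkron_blockVec_of_sq_eq hb2 hq (svec_add_finRotate_symm q k)
      (rocXi1_sq (by omega) q k)
  · exact rocAhat_mulVec_vkron_blockVec_of_sq_eq hb2 hq (cvec_add_finRotate_symm q k)
      (rocXi2_sq (by omega) q k)
  · exact rocAhat_mulVec_vkron_blockVec_of_sq_eq hb2 hq (svec_add_finRotate_symm q k)
      (rocXi2_sq (by omega) q k)
end

section
/- Let b ≥ 3 and q ≥ 3 be integers and let k ∈ {0, …, ⌊q/2⌋}. Let D_b ∈ ℝ^{b×b} be the diagonal matrix with (D_b)₁₁ = b+1 and (D_b)_{jj} = b−1 for j ≥ 2, and set H_k = D_b^{−1/2}(1_b 1_bᵀ + α_k e₁e₁ᵀ − I_b)D_b^{−1/2}. Then H_k(ξ₁⁽ᵏ⁾ e₁ + g₁) = λ₁⁽ᵏ⁾ (ξ₁⁽ᵏ⁾ e₁ + g₁) and H_k(ξ₂⁽ᵏ⁾ e₁ + g₁) = λ₂⁽ᵏ⁾ (ξ₂⁽ᵏ⁾ e₁ + g₁). -/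
open Matrix

/-- The local block diagonal degree matrix `D_b`: `(D_b)₁₁ = b+1`, `(D_b)_{jj} = b−1`
for `j ≥ 2`. -/
noncomputable def localDeg (b : ℕ) : Matrix (Fin b) (Fin b) ℝ :=
  Matrix.diagonal fun a => if a.val = 0 then (b : ℝ) + 1 else (b : ℝ) - 1

/-- The local matrix `H_k = D_b^{−1/2}(1_b 1_bᵀ + α_k e₁e₁ᵀ − I_b)D_b^{−1/2}`,
written with `D_b^{−1/2} = diag(1/√((D_b)_{jj}))`. -/
noncomputable def localH (b q k : ℕ) : Matrix (Fin b) (Fin b) ℝ :=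
  Matrix.diagonal (fun a => 1 / Real.sqrt (if a.val = 0 then (b : ℝ) + 1 else (b : ℝ) - 1)) *
    (Matrix.of (fun _ _ => (1 : ℝ)) + rocAlpha q k •
        Matrix.of (fun a c : Fin b => if a.val = 0 ∧ c.val = 0 then (1 : ℝ) else 0) - 1) *
    Matrix.diagonal (fun a => 1 / Real.sqrt (if a.val = 0 then (b : ℝ) + 1 else (b : ℝ) - 1))

/-!
Both `H_k` and `ξ e₁ + g₁` are constant off the corner index, so `H_k (ξ e₁ + g₁)` is again
of that shape and the eigen-equation reduces to two scalar equations. The one at the internal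
indices holds for every `ξ`; the one at the corner is, after clearing the square roots,
the quadratic `ξ² = 2 β_k ξ + (b − 1)`, whose roots are `ξ₁⁽ᵏ⁾` and `ξ₂⁽ᵏ⁾`.
-/

section CornerVec

variable {R : Type*} [CommRing R] {b : ℕ}

def cornerVec (b : ℕ) (x y : R) : Fin b → R := fun a => if a.val = 0 then x else y

lemma blockVec_eq_cornerVec (ξ : ℝ) : blockVec b ξ = cornerVec b ξ 1 := rfl

lemma smul_cornerVec (c x y : R) : c • cornerVec b x y = cornerVec b (c * x) (c * y) := by
  ext a
  simp only [cornerVec, Pi.smul_apply, smul_eq_mul, mul_ite]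

lemma sum_cornerVec (hb : 0 < b) (x y : R) :
    ∑ a, cornerVec b x y a = x + ((b : R) - 1) * y := by
  obtain ⟨n, rfl⟩ := Nat.exists_eq_add_of_lt hb
  simp [Fin.sum_univ_succ, cornerVec, Fin.succ_ne_zero]

lemma diagonal_cornerVec_mulVec (d₁ d₂ x y : R) :
    diagonal (cornerVec b d₁ d₂) *ᵥ cornerVec b x y = cornerVec b (d₁ * x) (d₂ * y) := by
  ext a
  simp only [mulVec_diagonal, cornerVec]
  split_ifs <;> rfl

lemma of_one_mulVec {m n : Type*} [Fintype n] (v : n → R) :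
    (of fun (_ : m) (_ : n) => (1 : R)) *ᵥ v = fun _ => ∑ j, v j := by
  ext
  simp [mulVec, dotProduct]

lemma of_cornerIndicator_mulVec_cornerVec (x y : R) :
    of (fun a c : Fin b => if a.val = 0 ∧ c.val = 0 then (1 : R) else 0) *ᵥ cornerVec b x y =
      cornerVec b x 0 := by
  ext a
  obtain ⟨n, rfl⟩ := Nat.exists_eq_succ_of_ne_zero a.pos.ne'
  cases a using Fin.cases <;>
    simp [mulVec, dotProduct, cornerVec, Fin.sum_univ_succ, Fin.succ_ne_zero]

lemma ones_add_smul_corner_sub_one_mulVec_cornerVec (hb : 0 < b) (α x y : R) :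
    (of (fun _ _ => (1 : R)) + α • of (fun a c : Fin b => if a.val = 0 ∧ c.val = 0 then 1 else 0)
        - 1) *ᵥ cornerVec b x y =
      cornerVec b (α * x + ((b : R) - 1) * y) (x + ((b : R) - 2) * y) := by
  rw [sub_mulVec, add_mulVec, smul_mulVec, one_mulVec, of_one_mulVec,
    of_cornerIndicator_mulVec_cornerVec, sum_cornerVec hb]
  ext a
  by_cases ha : a.val = 0 <;> simp [cornerVec, ha] <;> ring

end CornerVec

lemma localH_eq (b q k : ℕ) :
    localH b q k =
      diagonal (cornerVec b (1 / √((b : ℝ) + 1)) (1 / √((b : ℝ) - 1))) *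
        (of (fun _ _ => (1 : ℝ)) +
            rocAlpha q k • of (fun a c : Fin b => if a.val = 0 ∧ c.val = 0 then 1 else 0) - 1) *
        diagonal (cornerVec b (1 / √((b : ℝ) + 1)) (1 / √((b : ℝ) - 1))) := by
  have hdiag : (fun a : Fin b => 1 / √(if a.val = 0 then (b : ℝ) + 1 else (b : ℝ) - 1)) =
      cornerVec b (1 / √((b : ℝ) + 1)) (1 / √((b : ℝ) - 1)) :=
    funext fun a => apply_ite (fun t => 1 / √t) _ _ _
  rw [localH, hdiag]

lemma localH_mulVec_blockVec {b : ℕ} (hb : 0 < b) (q k : ℕ) (ξ : ℝ) :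
    localH b q k *ᵥ blockVec b ξ =
      cornerVec b
        (1 / √((b : ℝ) + 1) * (rocAlpha q k * (1 / √((b : ℝ) + 1) * ξ) +
          ((b : ℝ) - 1) * (1 / √((b : ℝ) - 1) * 1)))
        (1 / √((b : ℝ) - 1) * (1 / √((b : ℝ) + 1) * ξ +
          ((b : ℝ) - 2) * (1 / √((b : ℝ) - 1) * 1))) := by
  rw [localH_eq, ← mulVec_mulVec, ← mulVec_mulVec, blockVec_eq_cornerVec,
    diagonal_cornerVec_mulVec, ones_add_smul_corner_sub_one_mulVec_cornerVec hb,
    diagonal_cornerVec_mulVec]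

lemma sq_add_sqrt_sq_add (β c : ℝ) (hc : 0 ≤ c) :
    (β + √(β ^ 2 + c)) ^ 2 = 2 * β * (β + √(β ^ 2 + c)) + c := by
  linear_combination Real.sq_sqrt (by positivity : 0 ≤ β ^ 2 + c)

lemma sq_sub_sqrt_sq_add (β c : ℝ) (hc : 0 ≤ c) :
    (β - √(β ^ 2 + c)) ^ 2 = 2 * β * (β - √(β ^ 2 + c)) + c := by
  linear_combination Real.sq_sqrt (by positivity : 0 ≤ β ^ 2 + c)

lemma localH_mulVec_blockVec_of_sq_eq {b : ℕ} (hb : 2 ≤ b) (q k : ℕ) {ξ : ℝ}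
    (hξ : ξ ^ 2 = 2 * rocBeta b q k * ξ + ((b : ℝ) - 1)) :
    localH b q k *ᵥ blockVec b ξ =
      (ξ / √((b : ℝ) ^ 2 - 1) + 1 - 1 / ((b : ℝ) - 1)) • blockVec b ξ := by
  have hb₁ : (0 : ℝ) < (b : ℝ) - 1 := by
    have : (2 : ℝ) ≤ b := by exact_mod_cast hb
    linarith
  have hb₂ : (0 : ℝ) < (b : ℝ) + 1 := by positivity
  have hprod : √((b : ℝ) ^ 2 - 1) = √((b : ℝ) + 1) * √((b : ℝ) - 1) := by
    rw [← Real.sqrt_mul hb₂.le]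
    ring_nf
  have hβ : 2 * rocBeta b q k = rocAlpha q k * (√((b : ℝ) - 1) / √((b : ℝ) + 1)) -
      √((b : ℝ) + 1) * √((b : ℝ) - 1) + √((b : ℝ) + 1) / √((b : ℝ) - 1) := by
    rw [rocBeta, hprod, Real.sqrt_div hb₁.le, Real.sqrt_div hb₂.le]
    ring
  have hs₁ : 0 < √((b : ℝ) + 1) := Real.sqrt_pos.2 hb₂
  have hs₂ : 0 < √((b : ℝ) - 1) := Real.sqrt_pos.2 hb₁
  have hs₂sq : √((b : ℝ) - 1) ^ 2 = (b : ℝ) - 1 := Real.sq_sqrt hb₁.le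
  rw [localH_mulVec_blockVec (by omega), blockVec_eq_cornerVec, smul_cornerVec, hprod]
  generalize √((b : ℝ) + 1) = s₁ at *
  generalize √((b : ℝ) - 1) = s₂ at *
  have hb' : (b : ℝ) = s₂ ^ 2 + 1 := by linarith
  rw [hβ, hb'] at hξ
  rw [hb']
  congr 1
  · field_simp at hξ ⊢
    linear_combination -s₂ * hξ
  · field_simp
    ring

theorem local_block_eigenpairs_general (b q : ℕ) (hb : 3 ≤ b)
    (k : ℕ) :
    (localH b q k).mulVec (blockVec b (rocXi1 b q k)) =
      rocLam1 b q k • blockVec b (rocXi1 b q k) ∧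
    (localH b q k).mulVec (blockVec b (rocXi2 b q k)) =
      rocLam2 b q k • blockVec b (rocXi2 b q k) := by
  have hc : (0 : ℝ) ≤ (b : ℝ) - 1 := by
    have : (3 : ℝ) ≤ b := by exact_mod_cast hb
    linarith
  exact ⟨localH_mulVec_blockVec_of_sq_eq (by omega) q k (sq_add_sqrt_sq_add _ _ hc),
    localH_mulVec_blockVec_of_sq_eq (by omega) q k (sq_sub_sqrt_sq_add _ _ hc)⟩

/-- `ξᵢ⁽ᵏ⁾ e₁ + g₁` is an eigenvector of the local matrix `H_k`
with eigenvalue `λᵢ⁽ᵏ⁾`, for `i = 1, 2`. -/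
theorem local_block_eigenpairs (b q : ℕ) (hb : 3 ≤ b) (hq : 3 ≤ q)
    (k : ℕ) (hk : k ≤ q / 2) :
    (localH b q k).mulVec (blockVec b (rocXi1 b q k)) =
      rocLam1 b q k • blockVec b (rocXi1 b q k) ∧
    (localH b q k).mulVec (blockVec b (rocXi2 b q k)) =
      rocLam2 b q k • blockVec b (rocXi2 b q k) :=
  local_block_eigenpairs_general b q hb k
end

section
/- There exist a constant C > 0 and integers b₀, q₀ such that for all integers b ≥ b₀ and q ≥ q₀: |(1 − λ₁⁽¹⁾) − 4π²b²/(q²(b²−1)²)| ≤ C·(b^{−4} + b^{−2}q^{−4}). In particular, when b and q are of the same order, the smallest nonzero eigenvalue 1 − λ₁⁽¹⁾ of the normalized Laplacian of the ring of cliques R_{b,q} is O(b^{−2}q^{−2}). -/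
/-!
Clearing the square roots in the definition of `λ₁⁽ᵏ⁾` shows that `1 − λ₁⁽ᵏ⁾` is a function of
`δ = 2 − α_k` alone, namely `(δ − (√((u₀ + δ)² + c) − √(u₀² + c))) / (2(b + 1))` with
`u₀ = b(b − 3)/(b − 1)` and `c = 4(b + 1)`; it vanishes at `δ = 0`. A second-order expansion of
the square root gives `1 − λ₁⁽ᵏ⁾ = δ/(b² − b + 2) + O(δ²/b²)`, and `δ = 2 − 2cos(2π/q)` equals
`(2π/q)² + O(q⁻⁴)`. Finally `1/(b² − b + 2) = b²/(b² − 1)² + O(b⁻³)`, and the resulting error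
`O(q⁻² b⁻³)` is absorbed into `b⁻⁴ + b⁻² q⁻⁴` by AM–GM.
-/

open Real

theorem sqrt_mul_sq_add_sq_mul {t : ℝ} (ht : 0 ≤ t) (v c : ℝ) :
    √((t * v) ^ 2 + t ^ 2 * c) = t * √(v ^ 2 + c) := by
  rw [show (t * v) ^ 2 + t ^ 2 * c = t ^ 2 * (v ^ 2 + c) by ring,
    Real.sqrt_mul (sq_nonneg t), Real.sqrt_sq ht]

theorem sqrt_div_eq_div_sqrt_mul {a : ℝ} (ha : 0 ≤ a) (b : ℝ) : √(a / b) = a / √(a * b) := by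
  rw [Real.sqrt_div ha, Real.sqrt_mul ha, ← div_div, Real.div_sqrt]

theorem le_sqrt_add_sq_add_sub_sqrt (u δ : ℝ) {c : ℝ} (hc : 0 < c) :
    δ * u / √(u ^ 2 + c) ≤ √((u + δ) ^ 2 + c) - √(u ^ 2 + c) := by
  have hR₀ : 0 < √(u ^ 2 + c) := Real.sqrt_pos.mpr (by positivity)
  have hsq : √(u ^ 2 + c) ^ 2 = u ^ 2 + c := Real.sq_sqrt (by positivity)
  rw [le_sub_iff_add_le']
  apply Real.le_sqrt_of_sq_le
  generalize √(u ^ 2 + c) = R₀ at *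
  have hq : (δ * u / R₀) ^ 2 ≤ δ ^ 2 := by
    rw [div_pow, div_le_iff₀ (by positivity)]
    nlinarith [sq_nonneg δ]
  have hcross : R₀ * (δ * u / R₀) = δ * u := by field_simp
  nlinarith

theorem sqrt_add_sq_add_sub_sqrt_le (u δ : ℝ) {c : ℝ} (hc : 0 < c) :
    √((u + δ) ^ 2 + c) - √(u ^ 2 + c) ≤ δ * u / √(u ^ 2 + c) + δ ^ 2 / (2 * √(u ^ 2 + c)) := by
  have hR₀ : 0 < √(u ^ 2 + c) := Real.sqrt_pos.mpr (by positivity)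
  have hsq : √(u ^ 2 + c) ^ 2 = u ^ 2 + c := Real.sq_sqrt (by positivity)
  generalize √(u ^ 2 + c) = R₀ at *
  have hcross : R₀ * (δ * u / R₀ + δ ^ 2 / (2 * R₀)) = δ * u + δ ^ 2 / 2 := by field_simp
  have hpos : 0 ≤ R₀ + (δ * u / R₀ + δ ^ 2 / (2 * R₀)) := by
    refine (mul_nonneg_iff_of_pos_left hR₀).mp ?_
    nlinarith [sq_nonneg (u + δ / 2), sq_nonneg δ]
  rw [sub_le_iff_le_add', Real.sqrt_le_left hpos]
  nlinarith [sq_nonneg (δ * u / R₀ + δ ^ 2 / (2 * R₀))]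

theorem sq_sub_pow_four_div_three_le_sin_sq (y : ℝ) : y ^ 2 - y ^ 4 / 3 ≤ sin y ^ 2 := by
  have h_sin : |y| - |y| ^ 3 / 6 ≤ |sin y| := by
    linarith [abs_sub_sin_le y, abs_sub_abs_le_abs_sub y (sin y)]
  rw [← sq_abs y, ← sq_abs (sin y),
    show y ^ 4 = |y| ^ 4 by rw [pow_abs, abs_of_nonneg (by positivity)]]
  rcases le_total 0 (|y| - |y| ^ 3 / 6) with h0 | h0
  · nlinarith [pow_le_pow_left₀ h0 h_sin 2, pow_nonneg (abs_nonneg y) 6]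
  -- here `y ^ 2 ≥ 6`, so the left-hand side is negative
  · nlinarith [sq_nonneg (sin y), abs_nonneg y]

theorem two_sub_two_cos_mem_Icc (θ : ℝ) : 2 - 2 * cos θ ∈ Set.Icc (θ ^ 2 - θ ^ 4 / 12) (θ ^ 2) := by
  have h_half := sq_sub_pow_four_div_three_le_sin_sq (θ / 2)
  have h_cos : cos θ = 1 - 2 * sin (θ / 2) ^ 2 := by
    rw [← cos_two_mul_eq_one_sub, mul_div_cancel₀ _ two_ne_zero]
  constructor
  · rw [h_cos]; ring_nf at h_half ⊢; linarith
  · linarith [one_sub_sq_div_two_le_cos (x := θ)]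

theorem abs_one_div_sub_sq_div_sq_sub_one_sq_le {x : ℝ} (hx : 4 ≤ x) :
    |1 / (x ^ 2 - x + 2) - x ^ 2 / (x ^ 2 - 1) ^ 2| ≤ 4 / x ^ 3 := by
  have hQ : 0 < x ^ 2 - x + 2 := by nlinarith
  have hP : 0 < (x ^ 2 - 1) ^ 2 := pow_pos (by nlinarith) 2
  rw [div_sub_div _ _ hQ.ne' hP.ne', abs_div, abs_of_pos (mul_pos hQ hP),
    div_le_div_iff₀ (mul_pos hQ hP) (by positivity)]
  have hnum : |1 * (x ^ 2 - 1) ^ 2 - (x ^ 2 - x + 2) * x ^ 2| ≤ x ^ 3 := by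
    rw [abs_le]; constructor <;> nlinarith
  have hQ_ge : x ^ 2 ≤ 2 * (x ^ 2 - x + 2) := by nlinarith
  have hP_ge : x ^ 4 ≤ 2 * (x ^ 2 - 1) ^ 2 := by nlinarith
  calc _ ≤ x ^ 3 * x ^ 3 := mul_le_mul_of_nonneg_right hnum (by positivity)
    _ = x ^ 2 * x ^ 4 := by ring
    _ ≤ (2 * (x ^ 2 - x + 2)) * (2 * (x ^ 2 - 1) ^ 2) :=
        mul_le_mul hQ_ge hP_ge (by positivity) (by positivity)
    _ = 4 * ((x ^ 2 - x + 2) * (x ^ 2 - 1) ^ 2) := by ring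

noncomputable def rocGap (x δ : ℝ) : ℝ :=
  (δ - (√((x * (x - 3) / (x - 1) + δ) ^ 2 + 4 * (x + 1)) -
    √((x * (x - 3) / (x - 1)) ^ 2 + 4 * (x + 1)))) / (2 * (x + 1))

theorem sqrt_rocGap_base_eq {x : ℝ} (hx : 1 < x) :
    √((x * (x - 3) / (x - 1)) ^ 2 + 4 * (x + 1)) = (x ^ 2 - x + 2) / (x - 1) := by
  have hx1 : 0 < x - 1 := by linarith
  rw [Real.sqrt_eq_iff_mul_self_eq_of_pos (div_pos (by nlinarith) hx1)]
  field_simp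
  ring

theorem one_sub_rocLam1_eq_rocGap {b : ℕ} (hb : 1 < b) (q k : ℕ) :
    1 - rocLam1 b q k = rocGap b (2 - rocAlpha q k) := by
  have hβ : rocBeta b q k = 1 / 2 * (rocAlpha q k * √((b - 1) / (b + 1)) - √(b ^ 2 - 1) +
      √((b + 1) / (b - 1))) := rfl
  have hx : (1 : ℝ) < b := by exact_mod_cast hb
  rw [rocLam1, rocXi1]
  generalize rocBeta b q k = β at *
  generalize rocAlpha q k = α at *
  generalize (b : ℝ) = x at *
  have hx1 : 0 < x - 1 := by linarith
  have hx2 : 0 < x + 1 := by linarith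
  rw [sqrt_div_eq_div_sqrt_mul hx1.le, sqrt_div_eq_div_sqrt_mul hx2.le, mul_comm (x + 1)] at hβ
  rw [show x ^ 2 - 1 = (x - 1) * (x + 1) by ring] at hβ ⊢
  have hp : √((x - 1) * (x + 1)) ^ 2 = (x - 1) * (x + 1) := Real.sq_sqrt (by positivity)
  have hp0 : 0 < √((x - 1) * (x + 1)) := Real.sqrt_pos.mpr (by positivity)
  generalize √((x - 1) * (x + 1)) = p at *
  set t := (x - 1) / (2 * p)
  set v := α - (x + 1) * (x - 2) / (x - 1)
  -- `β = t v` and `x - 1 = t² · 4(x + 1)` pull the factor `t` out of the square root in `ξ₁`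
  have hβ_factor : β = t * v := by
    rw [hβ]; simp only [t, v]; field_simp
    rw [hp]; ring
  have ht : t ^ 2 * (4 * (x + 1)) = x - 1 := by
    simp only [t, div_pow, mul_pow, hp]; field_simp; ring
  have hv : (x * (x - 3) / (x - 1) + (2 - α)) ^ 2 = v ^ 2 := by
    simp only [v]; field_simp; ring
  rw [hβ_factor, ← ht, sqrt_mul_sq_add_sq_mul (by positivity), rocGap, sqrt_rocGap_base_eq hx, hv]
  generalize √(v ^ 2 + 4 * (x + 1)) = R
  simp only [v, t]
  field_simp
  rw [show p ^ 4 = (p ^ 2) ^ 2 by ring, hp]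
  ring

theorem abs_rocGap_sub_le {x : ℝ} (hx : 1 < x) (δ : ℝ) :
    |rocGap x δ - δ / (x ^ 2 - x + 2)| ≤ δ ^ 2 / (4 * x ^ 2) := by
  have hx1 : 0 < x - 1 := by linarith
  have hc : (0 : ℝ) < 4 * (x + 1) := by linarith
  have lower := le_sqrt_add_sq_add_sub_sqrt (x * (x - 3) / (x - 1)) δ hc
  have upper := sqrt_add_sq_add_sub_sqrt_le (x * (x - 3) / (x - 1)) δ hc
  rw [sqrt_rocGap_base_eq hx] at lower upper
  rw [rocGap, sqrt_rocGap_base_eq hx]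
  generalize √((x * (x - 3) / (x - 1) + δ) ^ 2 + 4 * (x + 1)) - (x ^ 2 - x + 2) / (x - 1) = D
    at lower upper ⊢
  set R₀ := (x ^ 2 - x + 2) / (x - 1)
  have hR₀ : 0 < R₀ := div_pos (by nlinarith) hx1
  have hlin : δ / (x ^ 2 - x + 2) = (δ - δ * (x * (x - 3) / (x - 1)) / R₀) / (2 * (x + 1)) := by
    simp only [R₀]; field_simp; ring
  have herr : δ ^ 2 / (2 * R₀) / (2 * (x + 1)) ≤ δ ^ 2 / (4 * x ^ 2) := by
    have hx_sq : x ^ 2 ≤ (x + 1) * R₀ := by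
      rw [← mul_div_assoc, le_div_iff₀ hx1]; nlinarith
    rw [div_div]
    exact div_le_div_of_nonneg_left (sq_nonneg δ) (by positivity) (by linarith)
  have hdiff : (δ - D) / (2 * (x + 1)) - (δ - δ * (x * (x - 3) / (x - 1)) / R₀) / (2 * (x + 1)) =
      (δ * (x * (x - 3) / (x - 1)) / R₀ - D) / (2 * (x + 1)) := by ring
  rw [hlin, hdiff, abs_le]
  constructor
  · calc -(δ ^ 2 / (4 * x ^ 2)) ≤ -(δ ^ 2 / (2 * R₀) / (2 * (x + 1))) := neg_le_neg herr
      _ ≤ _ := by rw [← neg_div]; gcongr; linarith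
  · calc _ ≤ (0 : ℝ) := div_nonpos_of_nonpos_of_nonneg (by linarith) (by positivity)
      _ ≤ _ := by positivity

theorem abs_rocGap_two_sub_two_cos_sub_le {x θ : ℝ} (hx : 4 ≤ x) :
    |rocGap x (2 - 2 * cos θ) - θ ^ 2 * x ^ 2 / (x ^ 2 - 1) ^ 2| ≤
      3 * θ ^ 4 / x ^ 2 + 2 / x ^ 4 := by
  obtain ⟨hδ_lo, hδ_hi⟩ := two_sub_two_cos_mem_Icc θ
  have hδ0 : 0 ≤ 2 - 2 * cos θ := by linarith [cos_le_one θ]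
  generalize 2 - 2 * cos θ = δ at *
  have h_lin : |rocGap x δ - δ / (x ^ 2 - x + 2)| ≤ θ ^ 4 / (4 * x ^ 2) := by
    refine (abs_rocGap_sub_le (by linarith) δ).trans ?_
    gcongr
    calc δ ^ 2 ≤ (θ ^ 2) ^ 2 := pow_le_pow_left₀ hδ0 hδ_hi 2
      _ = θ ^ 4 := by ring
  have h_cos : |δ / (x ^ 2 - x + 2) - θ ^ 2 / (x ^ 2 - x + 2)| ≤ θ ^ 4 / (6 * x ^ 2) := by
    have hQ_pos : 0 < x ^ 2 - x + 2 := by nlinarith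
    have hQ_ge : x ^ 2 ≤ 2 * (x ^ 2 - x + 2) := by nlinarith
    rw [← sub_div, abs_div, abs_sub_comm, abs_of_nonneg (sub_nonneg.2 hδ_hi), abs_of_pos hQ_pos,
      div_le_div_iff₀ hQ_pos (by positivity)]
    nlinarith [pow_nonneg (sq_nonneg θ) 2]
  have h_coef : |θ ^ 2 / (x ^ 2 - x + 2) - θ ^ 2 * x ^ 2 / (x ^ 2 - 1) ^ 2| ≤
      2 * θ ^ 4 / x ^ 2 + 2 / x ^ 4 := by
    have h_amgm : 2 * θ ^ 4 / x ^ 2 + 2 / x ^ 4 - θ ^ 2 * (4 / x ^ 3) =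
        2 * (θ ^ 2 * x - 1) ^ 2 / x ^ 4 := by
      field_simp; ring
    rw [show θ ^ 2 / (x ^ 2 - x + 2) - θ ^ 2 * x ^ 2 / (x ^ 2 - 1) ^ 2 =
        θ ^ 2 * (1 / (x ^ 2 - x + 2) - x ^ 2 / (x ^ 2 - 1) ^ 2) by ring,
      abs_mul, abs_of_nonneg (sq_nonneg θ)]
    refine (mul_le_mul_of_nonneg_left (abs_one_div_sub_sq_div_sq_sub_one_sq_le hx)
      (sq_nonneg θ)).trans ?_
    linarith [show 0 ≤ 2 * (θ ^ 2 * x - 1) ^ 2 / x ^ 4 by positivity]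
  calc _ ≤ |rocGap x δ - δ / (x ^ 2 - x + 2)| +
        |δ / (x ^ 2 - x + 2) - θ ^ 2 * x ^ 2 / (x ^ 2 - 1) ^ 2| := abs_sub_le _ _ _
    _ ≤ |rocGap x δ - δ / (x ^ 2 - x + 2)| +
        (|δ / (x ^ 2 - x + 2) - θ ^ 2 / (x ^ 2 - x + 2)| +
          |θ ^ 2 / (x ^ 2 - x + 2) - θ ^ 2 * x ^ 2 / (x ^ 2 - 1) ^ 2|) := by
        gcongr; exact abs_sub_le _ _ _
    _ ≤ _ := by
        have h_sum : θ ^ 4 / (4 * x ^ 2) + θ ^ 4 / (6 * x ^ 2) + 2 * θ ^ 4 / x ^ 2 ≤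
            3 * θ ^ 4 / x ^ 2 := by
          rw [← sub_nonneg, show 3 * θ ^ 4 / x ^ 2 - (θ ^ 4 / (4 * x ^ 2) + θ ^ 4 / (6 * x ^ 2) +
            2 * θ ^ 4 / x ^ 2) = 7 / 12 * (θ ^ 4 / x ^ 2) by field_simp; ring]
          positivity
        linarith

/-- The smallest nonzero eigenvalue `1 − λ₁⁽¹⁾` of the normalized
Laplacian of the ring of cliques equals `4π²b²/(q²(b²−1)²)` up to an error of order
`b^{−4} + b^{−2}q^{−4}`; in particular, when `b` and `q` are of the same order it is
`O(b^{−2}q^{−2})`. -/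
theorem roc_fiedler_value_asymptotics :
    ∃ C : ℝ, 0 < C ∧ ∃ b₀ q₀ : ℕ, ∀ b : ℕ, b₀ ≤ b → ∀ q : ℕ, q₀ ≤ q →
      |(1 - rocLam1 b q 1) -
        4 * Real.pi ^ 2 * (b : ℝ) ^ 2 / ((q : ℝ) ^ 2 * ((b : ℝ) ^ 2 - 1) ^ 2)| ≤
      C * (1 / (b : ℝ) ^ 4 + 1 / ((b : ℝ) ^ 2 * (q : ℝ) ^ 4)) := by
  -- every estimate is uniform in `θ = 2π/q`, so `q` needs no lower bound
  refine ⟨12288, by norm_num, 4, 0, fun b hb q _ => ?_⟩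
  have hx : (4 : ℝ) ≤ b := by exact_mod_cast hb
  have h_gap : 1 - rocLam1 b q 1 = rocGap b (2 - 2 * cos (2 * π / q)) := by
    rw [one_sub_rocLam1_eq_rocGap (by omega), rocAlpha, Nat.cast_one, mul_one]
  have h_main : 4 * π ^ 2 * (b : ℝ) ^ 2 / ((q : ℝ) ^ 2 * ((b : ℝ) ^ 2 - 1) ^ 2) =
      (2 * π / q) ^ 2 * (b : ℝ) ^ 2 / ((b : ℝ) ^ 2 - 1) ^ 2 := by
    rw [div_pow, div_mul_eq_mul_div, div_div]; ring
  have h_err : 3 * (2 * π / q) ^ 4 / (b : ℝ) ^ 2 =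
      48 * π ^ 4 * (1 / ((b : ℝ) ^ 2 * (q : ℝ) ^ 4)) := by
    ring
  have hπ : π ^ 4 ≤ 256 := by
    calc π ^ 4 ≤ 4 ^ 4 := pow_le_pow_left₀ pi_pos.le pi_le_four 4
      _ = 256 := by norm_num
  rw [h_gap, h_main]
  refine (abs_rocGap_two_sub_two_cos_sub_le hx).trans ?_
  set u := 1 / ((b : ℝ) ^ 2 * (q : ℝ) ^ 4)
  have hu : 0 ≤ u := by positivity
  have h_b : 2 / (b : ℝ) ^ 4 ≤ 12288 * (1 / (b : ℝ) ^ 4) := by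
    rw [← mul_one_div]; gcongr; norm_num
  rw [h_err]
  nlinarith [mul_le_mul_of_nonneg_right hπ hu]
end

section
/- Let R_{b,q} be the ring of cliques with b ≥ 4, q ≥ 2, n = bq, and let W ⊂ ℝⁿ be the span of the q corner indicator vectors together with the q indicator vectors of the sets of internal vertices of the blocks; let P_W denote orthogonal projection onto W. Let y ∈ ℝⁿ be nonzero with yᵀ1 = 0 and set z = (I − P_W)y. If ‖z‖₂ ≤ (1 + 2qn)^{−1/2}·‖y‖₂, then y recovers all the cliques of R_{b,q}. -/
open Matrix
set_option maxHeartbeats 1000000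

/-- A vector `y` indexed by the vertices of the ring of cliques `R_{b,q}`
(blocks `i : Fin q`, positions `a : Fin b`, `a = 0` the corner) *recovers all the
cliques* if some threshold `t` strictly between the minimal and maximal entries of
`y` places, within every block, all internal vertices on the same side. -/
def recoversCliques {b q : ℕ} (y : Fin q × Fin b → ℝ) : Prop :=
  ∃ t : ℝ, (∃ p, y p < t) ∧ (∃ p, t < y p) ∧
    ∀ (i : Fin q) (a c : Fin b), a.val ≠ 0 → c.val ≠ 0 → (y (i, a) < t ↔ y (i, c) < t)

/-- The subspace `W ⊂ ℝ^{bq}` spanned by the `q` corner indicator vectors together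
with the `q` indicator vectors of the sets of internal vertices of the blocks. -/
noncomputable def blockIndicatorSpace (b q : ℕ) : Submodule ℝ (Fin q × Fin b → ℝ) :=
  Submodule.span ℝ
    ({w : Fin q × Fin b → ℝ | ∃ i : Fin q,
        w = fun p => if p.1 = i ∧ p.2.val = 0 then (1 : ℝ) else 0} ∪
     {w : Fin q × Fin b → ℝ | ∃ i : Fin q,
        w = fun p => if p.1 = i ∧ p.2.val ≠ 0 then (1 : ℝ) else 0})

/-- For the ring of cliques `R_{b,q}` (`b ≥ 4`, `q ≥ 2`, `n = bq`),
if `y ≠ 0`, `yᵀ1 = 0`, and `z = (I − P_W)y` (characterized by `y − z ∈ W` and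
`z ⊥ W`) satisfies `‖z‖₂ ≤ (1 + 2qn)^{−1/2}‖y‖₂`, then `y` recovers all the cliques. -/
theorem roc_minimal_perturbation_lower_bound (b q : ℕ) (hb : 4 ≤ b) (hq : 2 ≤ q)
    (y : Fin q × Fin b → ℝ) (hy0 : y ≠ 0) (hsum : (∑ p, y p) = 0)
    (z : Fin q × Fin b → ℝ)
    (hproj : y - z ∈ blockIndicatorSpace b q)
    (hperp : ∀ w ∈ blockIndicatorSpace b q, z ⬝ᵥ w = 0)
    (hznorm : Real.sqrt (∑ p, z p ^ 2) ≤
      (1 / Real.sqrt (1 + 2 * (q : ℝ) * ((b : ℝ) * q))) * Real.sqrt (∑ p, y p ^ 2)) :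
    recoversCliques y := by
  classical
  have hb0 : 0 < b := by omega
  have hq0 : 0 < q := by omega
  -- constancy of y - z on internal vertices of each block
  have hconstW : ∀ w ∈ blockIndicatorSpace b q, ∀ (i : Fin q) (a c : Fin b),
      a.val ≠ 0 → c.val ≠ 0 → w (i, a) = w (i, c) := by
    intro w hw
    induction hw using Submodule.span_induction with
    | mem w hw =>
      intro i a c ha hc
      rcases hw with ⟨j, rfl⟩ | ⟨j, rfl⟩
      · simp [ha, hc]
      · by_cases h : i = j <;> simp [h, ha, hc]
    | zero => intro i a c ha hc; simp
    | add u v _ _ hu hv =>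
      intro i a c ha hc
      simp only [Pi.add_apply, hu i a c ha hc, hv i a c ha hc]
    | smul r u _ hu =>
      intro i a c ha hc
      simp only [Pi.smul_apply, hu i a c ha hc]
  have hconst : ∀ (i : Fin q) (a c : Fin b), a.val ≠ 0 → c.val ≠ 0 →
      y (i, a) - z (i, a) = y (i, c) - z (i, c) := by
    intro i a c ha hc
    have := hconstW _ hproj i a c ha hc
    simpa using this
  -- setup
  set S : Finset (Fin b) := Finset.univ.filter (fun a => a.val ≠ 0) with hSdef
  have hSmem : ∀ a : Fin b, a.val ≠ 0 → a ∈ S := by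
    intro a ha; simp [hSdef, ha]
  have hSne : S.Nonempty := ⟨⟨1, by omega⟩, hSmem _ (by simp)⟩
  have hUne : (Finset.univ : Finset (Fin q × Fin b)).Nonempty :=
    ⟨(⟨0, hq0⟩, ⟨0, hb0⟩), Finset.mem_univ _⟩
  set mY := Finset.univ.inf' hUne y with hmYdef
  set MY := Finset.univ.sup' hUne y with hMYdef
  set m : Fin q → ℝ := fun i => S.inf' hSne (fun a => y (i, a)) with hmdef
  set M : Fin q → ℝ := fun i => S.sup' hSne (fun a => y (i, a)) with hMdef
  set Y := Real.sqrt (∑ p, y p ^ 2) with hYdef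
  set Z := Real.sqrt (∑ p, z p ^ 2) with hZdef
  have hY2pos : 0 < ∑ p, y p ^ 2 := by
    obtain ⟨p, hp⟩ := Function.ne_iff.mp hy0
    exact Finset.sum_pos' (fun _ _ => sq_nonneg _)
      ⟨p, Finset.mem_univ _, sq_pos_of_ne_zero hp⟩
  have hYpos : 0 < Y := Real.sqrt_pos.mpr hY2pos
  have hZnn : 0 ≤ Z := Real.sqrt_nonneg _
  set n : ℝ := (b : ℝ) * q with hndef
  have hnpos : (0:ℝ) < n := by positivity
  have hqpos : (0:ℝ) < (q:ℝ) := by positivity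
  -- per-block bound
  set s : Fin q → ℝ := fun i => Real.sqrt (∑ a : Fin b, z (i, a) ^ 2) with hsdef
  have hblock : ∀ i, M i - m i ≤ Real.sqrt 2 * s i := by
    intro i
    obtain ⟨a, haS, hMa⟩ := S.exists_mem_eq_sup' hSne (fun a => y (i, a))
    obtain ⟨c, hcS, hmc⟩ := S.exists_mem_eq_inf' hSne (fun a => y (i, a))
    have ha0 : a.val ≠ 0 := by simpa [hSdef] using haS
    have hc0 : c.val ≠ 0 := by simpa [hSdef] using hcS
    have hd : M i - m i = z (i, a) - z (i, c) := by
      have := hconst i a c ha0 hc0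
      rw [hMdef, hmdef]; dsimp only; rw [hMa, hmc]; linarith
    have hsq : (z (i, a) - z (i, c)) ^ 2 ≤ 2 * ∑ a' : Fin b, z (i, a') ^ 2 := by
      by_cases hac : a = c
      · subst hac
        have : (0:ℝ) ≤ ∑ a' : Fin b, z (i, a') ^ 2 :=
          Finset.sum_nonneg fun _ _ => sq_nonneg _
        simpa using by linarith
      · have hpair : z (i, a) ^ 2 + z (i, c) ^ 2 ≤ ∑ a' : Fin b, z (i, a') ^ 2 := by
          have := Finset.sum_le_sum_of_subset_of_nonneg
            (Finset.subset_univ ({a, c} : Finset (Fin b)))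
            (fun a' _ _ => sq_nonneg (z (i, a')))
          rwa [Finset.sum_pair hac] at this
        nlinarith [sq_nonneg (z (i, a) + z (i, c))]
    calc M i - m i = z (i, a) - z (i, c) := hd
      _ ≤ |z (i, a) - z (i, c)| := le_abs_self _
      _ = Real.sqrt ((z (i, a) - z (i, c)) ^ 2) := (Real.sqrt_sq_eq_abs _).symm
      _ ≤ Real.sqrt (2 * ∑ a' : Fin b, z (i, a') ^ 2) := Real.sqrt_le_sqrt hsq
      _ = Real.sqrt 2 * s i := by
          rw [hsdef]; exact Real.sqrt_mul (by norm_num) _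
  -- Cauchy–Schwarz: sum of s i
  have hs_sum_sq : ∑ i, s i ^ 2 = ∑ p, z p ^ 2 := by
    rw [Fintype.sum_prod_type]
    refine Finset.sum_congr rfl fun i _ => ?_
    rw [hsdef]
    exact Real.sq_sqrt (Finset.sum_nonneg fun _ _ => sq_nonneg _)
  have hCS : (∑ i, s i) ^ 2 ≤ (q : ℝ) * ∑ i, s i ^ 2 := by
    simpa using sq_sum_le_card_mul_sum_sq (s := Finset.univ) (f := s)
  have hs_sum_nn : 0 ≤ ∑ i, s i :=
    Finset.sum_nonneg fun i _ => Real.sqrt_nonneg _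
  have hs_sum : ∑ i, s i ≤ Real.sqrt q * Z := by
    have h1 : (∑ i, s i) ^ 2 ≤ (Real.sqrt q * Z) ^ 2 := by
      rw [mul_pow, Real.sq_sqrt hqpos.le, hZdef,
        Real.sq_sqrt (Finset.sum_nonneg fun _ _ => sq_nonneg (z _))]
      rw [hs_sum_sq] at hCS; exact hCS
    have h2 : 0 ≤ Real.sqrt q * Z := by positivity
    nlinarith
  -- total bad length bound
  have hbad : ∑ i, (M i - m i) ≤ Real.sqrt 2 * Real.sqrt q * Z := by
    calc ∑ i, (M i - m i) ≤ ∑ i, Real.sqrt 2 * s i := Finset.sum_le_sum fun i _ => hblock i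
      _ = Real.sqrt 2 * ∑ i, s i := by rw [Finset.mul_sum]
      _ ≤ Real.sqrt 2 * (Real.sqrt q * Z) := by
          exact mul_le_mul_of_nonneg_left hs_sum (Real.sqrt_nonneg 2)
      _ = Real.sqrt 2 * Real.sqrt q * Z := by ring
  -- strict: sqrt2 sqrtq Z < Y / sqrt n
  have hdenpos : (0:ℝ) < 1 + 2 * (q:ℝ) * n := by positivity
  have hkey2 : Real.sqrt 2 * Real.sqrt q * Z < Y / Real.sqrt n := by
    have hZb : Z ≤ Y / Real.sqrt (1 + 2 * (q:ℝ) * n) := by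
      rw [div_eq_inv_mul, ← one_div]; exact hznorm
    have hlt : Real.sqrt 2 * Real.sqrt q * Real.sqrt n < Real.sqrt (1 + 2 * (q:ℝ) * n) := by
      rw [← Real.sqrt_mul (by norm_num : (0:ℝ) ≤ 2), ← Real.sqrt_mul (by positivity)]
      exact Real.sqrt_lt_sqrt (by positivity) (by linarith)
    have hsn : (0:ℝ) < Real.sqrt n := Real.sqrt_pos.mpr hnpos
    have hsd : (0:ℝ) < Real.sqrt (1 + 2 * (q:ℝ) * n) := Real.sqrt_pos.mpr hdenpos
    calc Real.sqrt 2 * Real.sqrt q * Z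
        ≤ Real.sqrt 2 * Real.sqrt q * (Y / Real.sqrt (1 + 2 * (q:ℝ) * n)) := by
          exact mul_le_mul_of_nonneg_left hZb (by positivity)
      _ < Y / Real.sqrt n := by
          rw [mul_div_assoc']
          rw [div_lt_div_iff₀ hsd hsn]
          nlinarith [hlt, hYpos, hsn.le, hsd.le, Real.sqrt_nonneg (2:ℝ), Real.sqrt_nonneg (q:ℝ)]
  -- range lower bound
  have hsn : (0:ℝ) < Real.sqrt n := Real.sqrt_pos.mpr hnpos
  have hmY_le : ∀ p, mY ≤ y p := fun p => Finset.inf'_le _ (Finset.mem_univ p)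
  have hMY_ge : ∀ p, y p ≤ MY := fun p => Finset.le_sup' _ (Finset.mem_univ p)
  have hcardn : ((Fintype.card (Fin q × Fin b) : ℕ) : ℝ) = n := by
    simp [hndef]; push_cast; ring
  have hMY0 : 0 ≤ MY := by
    have h1 : (0:ℝ) ≤ ∑ _p : Fin q × Fin b, MY := by
      rw [← hsum]; exact Finset.sum_le_sum fun p _ => hMY_ge p
    rw [Finset.sum_const, Finset.card_univ, nsmul_eq_mul, hcardn] at h1
    nlinarith
  have hmY0 : mY ≤ 0 := by
    have h1 : (∑ _p : Fin q × Fin b, mY) ≤ 0 := by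
      rw [← hsum]; exact Finset.sum_le_sum fun p _ => hmY_le p
    rw [Finset.sum_const, Finset.card_univ, nsmul_eq_mul, hcardn] at h1
    nlinarith
  have hrange : Y / Real.sqrt n ≤ MY - mY := by
    have hbd : ∀ p : Fin q × Fin b, y p ^ 2 ≤ (MY - mY) ^ 2 := by
      intro p
      have h1 := hmY_le p
      have h2 := hMY_ge p
      nlinarith
    have h2 : (∑ p, y p ^ 2) ≤ n * (MY - mY) ^ 2 := by
      have h := Finset.sum_le_sum (s := (Finset.univ : Finset (Fin q × Fin b)))
        (f := fun p => y p ^ 2) (g := fun _ => (MY - mY) ^ 2) (fun p _ => hbd p)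
      rwa [Finset.sum_const, Finset.card_univ, nsmul_eq_mul, hcardn] at h
    have h3 : Y ≤ Real.sqrt (n * (MY - mY) ^ 2) := Real.sqrt_le_sqrt h2
    rw [Real.sqrt_mul hnpos.le, Real.sqrt_sq (by linarith)] at h3
    rw [div_le_iff₀ hsn]
    nlinarith
  have hKEY : ∑ i, (M i - m i) < MY - mY :=
    lt_of_le_of_lt hbad (lt_of_lt_of_le hkey2 hrange)
  have hmm : ∀ i, 0 ≤ M i - m i := by
    intro i
    obtain ⟨a, haS⟩ := hSne
    have h1 : m i ≤ y (i, a) := Finset.inf'_le (fun a => y (i, a)) haS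
    have h2 : y (i, a) ≤ M i := Finset.le_sup' (fun a => y (i, a)) haS
    linarith
  -- measure argument: find a good threshold
  have hGne : (Set.Ioo mY MY \ ⋃ i, Set.Ioc (m i) (M i)).Nonempty := by
    by_contra h
    rw [Set.not_nonempty_iff_eq_empty, Set.diff_eq_empty] at h
    have h1 := MeasureTheory.measure_mono (μ := MeasureTheory.volume) h
    have h2 := MeasureTheory.measure_iUnion_fintype_le MeasureTheory.volume
      (fun i => Set.Ioc (m i) (M i))
    rw [Real.volume_Ioo] at h1
    simp_rw [Real.volume_Ioc] at h2
    rw [← ENNReal.ofReal_sum_of_nonneg (fun i _ => hmm i)] at h2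
    have h3 : ENNReal.ofReal (MY - mY) ≤ ENNReal.ofReal (∑ i, (M i - m i)) := h1.trans h2
    rw [ENNReal.ofReal_le_ofReal_iff (Finset.sum_nonneg fun i _ => hmm i)] at h3
    linarith
  obtain ⟨t, htIoo, htU⟩ := hGne
  refine ⟨t, ?_, ?_, ?_⟩
  · obtain ⟨p, _, hp⟩ := Finset.exists_mem_eq_inf' hUne y
    exact ⟨p, by rw [hmYdef, hp] at htIoo; exact htIoo.1⟩
  · obtain ⟨p, _, hp⟩ := Finset.exists_mem_eq_sup' hUne y
    exact ⟨p, by rw [hMYdef, hp] at htIoo; exact htIoo.2⟩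
  · intro i a c ha hc
    have hti : t ∉ Set.Ioc (m i) (M i) := fun ht => htU (Set.mem_iUnion.mpr ⟨i, ht⟩)
    rw [Set.mem_Ioc, not_and_or, not_lt, not_le] at hti
    have hma : m i ≤ y (i, a) := Finset.inf'_le (fun a => y (i, a)) (hSmem a ha)
    have hMa : y (i, a) ≤ M i := Finset.le_sup' (fun a => y (i, a)) (hSmem a ha)
    have hmc2 : m i ≤ y (i, c) := Finset.inf'_le (fun a => y (i, a)) (hSmem c hc)
    have hMc : y (i, c) ≤ M i := Finset.le_sup' (fun a => y (i, a)) (hSmem c hc)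
    rcases hti with h | h
    · constructor <;> (intro h'; linarith)
    · constructor <;> (intro h'; linarith)
end

section
/- Let Z₁, …, Z_m be independent standard Gaussian random variables and Z = Σ_{i=1}^m Z_i². Then for every c₀ ∈ (0,1), P[Z ≤ c₀·m] ≤ (c₀·e^{1−c₀})^{m/2}, and for every c₁ > 1, P[Z ≥ c₁·m] ≤ (c₁·e^{1−c₁})^{m/2}. -/
/-!
Chernoff's method. For `2 v t < 1` the Gaussian integral gives `E[exp (t X²)] = (1 - 2 v t)^(-1/2)`
when `X ~ N(0, v)`, so by independence the moment generating function of `Z` at `t < 1/2` is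
`(1 - 2t)^(-m/2)`. Markov's inequality for `exp (t Z)` at the optimal `t = (1 - 1/c)/2`, which is
`≤ 0` for the lower tail and `≥ 0` for the upper one, yields exactly `(c e^(1-c))^(m/2)`.
-/

open MeasureTheory ProbabilityTheory
open scoped NNReal
open Real

namespace ProbabilityTheory

lemma integral_exp_mul_sq_gaussianReal {v : ℝ≥0} (hv : v ≠ 0) {t : ℝ} (ht : 2 * v * t < 1) :
    ∫ x, exp (t * x ^ 2) ∂gaussianReal 0 v = (1 - 2 * v * t) ^ (-(1 / 2 : ℝ)) := by
  have hv' : (0 : ℝ) < v := by positivity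
  have hdensity : ∀ x : ℝ, gaussianPDFReal 0 v x • exp (t * x ^ 2)
      = (√(2 * π * v))⁻¹ * exp (-((1 - 2 * v * t) / (2 * v)) * x ^ 2) := by
    intro x
    rw [gaussianPDFReal, smul_eq_mul, mul_assoc, ← exp_add]
    congr 2
    field_simp
    ring
  have hsqrt :
      √(π / ((1 - 2 * v * t) / (2 * v))) = √(2 * π * v) * √((1 - 2 * v * t)⁻¹) := by
    rw [← sqrt_mul (by positivity)]
    congr 1
    field_simp
  simp_rw [integral_gaussianReal_eq_integral_smul hv, hdensity, integral_const_mul,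
    integral_gaussian, hsqrt, inv_mul_cancel_left₀ (by positivity : √(2 * π * v) ≠ 0),
    sqrt_eq_rpow, inv_rpow (sub_pos.2 ht).le, rpow_neg (sub_pos.2 ht).le]

lemma mgf_sq_gaussianReal {Ω : Type*} {mΩ : MeasurableSpace Ω} {P : Measure Ω} {X : Ω → ℝ}
    {v : ℝ≥0} (hX : P.map X = gaussianReal 0 v) (hv : v ≠ 0) {t : ℝ} (ht : 2 * v * t < 1) :
    mgf (fun ω ↦ X ω ^ 2) P t = (1 - 2 * v * t) ^ (-(1 / 2 : ℝ)) := by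
  have hXm : AEMeasurable X P := .of_map_ne_zero (hX ▸ IsProbabilityMeasure.ne_zero _)
  rw [← integral_exp_mul_sq_gaussianReal hv ht, ← hX]
  exact (mgf_map (X := fun x ↦ x ^ 2) hXm (by fun_prop)).symm

lemma iIndepFun.mgf_sum_sq_gaussianReal {Ω ι : Type*} {mΩ : MeasurableSpace Ω} {P : Measure Ω}
    [Fintype ι] {X : ι → Ω → ℝ} (hindep : iIndepFun X P) {v : ℝ≥0}
    (hX : ∀ i, P.map (X i) = gaussianReal 0 v) (hv : v ≠ 0) {t : ℝ} (ht : 2 * v * t < 1) :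
    mgf (fun ω ↦ ∑ i, X i ω ^ 2) P t = (1 - 2 * v * t) ^ (-(Fintype.card ι : ℝ) / 2) := by
  have hindep_sq : iIndepFun (fun i ω ↦ X i ω ^ 2) P :=
    hindep.comp (fun _ x ↦ x ^ 2) (fun _ ↦ measurable_id.pow_const 2)
  have hmeas_sq : ∀ i, AEMeasurable (fun ω ↦ X i ω ^ 2) P := fun i ↦
    (AEMeasurable.of_map_ne_zero ((hX i) ▸ IsProbabilityMeasure.ne_zero _)).pow_const 2
  have hsum := hindep_sq.mgf_sum₀ hmeas_sq (t := t) Finset.univ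
  rw [Finset.sum_fn] at hsum
  rw [hsum, Finset.prod_congr rfl fun i _ ↦ mgf_sq_gaussianReal (hX i) hv ht, Finset.prod_const,
    Finset.card_univ, ← rpow_natCast, ← rpow_mul (sub_pos.2 ht).le]
  ring_nf

lemma chiSq_chernoff_bound_eq {c : ℝ} (hc : 0 < c) (k : ℝ) :
    exp (-((1 - c⁻¹) / 2) * (c * k)) * (1 - 2 * ((1 - c⁻¹) / 2)) ^ (-k / 2)
      = (c * exp (1 - c)) ^ (k / 2) := by
  have hexp : -((1 - c⁻¹) / 2) * (c * k) = (1 - c) * (k / 2) := by field_simp; ring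
  have hbase : 1 - 2 * ((1 - c⁻¹) / 2) = c⁻¹ := by ring
  rw [hexp, hbase, exp_mul, inv_rpow hc.le, neg_div, rpow_neg hc.le, inv_inv,
    mul_rpow hc.le (exp_pos _).le, mul_comm]

section Tails

variable {Ω : Type*} {mΩ : MeasurableSpace Ω} {μ : Measure Ω} [NeZero μ] {S : Ω → ℝ} {k : ℝ}

lemma integrable_exp_mul_of_mgf_eq_chiSq (hS : ∀ t < 1 / 2, mgf S μ t = (1 - 2 * t) ^ (-k / 2))
    {t : ℝ} (ht : t < 1 / 2) : Integrable (fun ω ↦ exp (t * S ω)) μ :=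
  mgf_pos_iff.1 <| hS t ht ▸ rpow_pos_of_pos (by linarith) _

lemma measure_le_le_of_mgf_eq_chiSq [IsFiniteMeasure μ]
    (hS : ∀ t < 1 / 2, mgf S μ t = (1 - 2 * t) ^ (-k / 2))
    {c : ℝ} (hc₀ : 0 < c) (hc₁ : c ≤ 1) :
    μ {ω | S ω ≤ c * k} ≤ ENNReal.ofReal ((c * exp (1 - c)) ^ (k / 2)) := by
  set t := (1 - c⁻¹) / 2
  have ht : t ≤ 0 := by have := one_le_inv_iff₀.2 ⟨hc₀, hc₁⟩; simp only [t]; linarith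
  calc μ {ω | S ω ≤ c * k} = ENNReal.ofReal (μ.real {ω | S ω ≤ c * k}) :=
        (ofReal_measureReal).symm
    _ ≤ ENNReal.ofReal (exp (-t * (c * k)) * mgf S μ t) :=
        ENNReal.ofReal_le_ofReal <| measure_le_le_exp_mul_mgf _ ht <|
          integrable_exp_mul_of_mgf_eq_chiSq hS (by linarith)
    _ = ENNReal.ofReal ((c * exp (1 - c)) ^ (k / 2)) := by
        rw [hS t (by linarith), chiSq_chernoff_bound_eq hc₀]

lemma measure_ge_le_of_mgf_eq_chiSq [IsFiniteMeasure μ]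
    (hS : ∀ t < 1 / 2, mgf S μ t = (1 - 2 * t) ^ (-k / 2))
    {c : ℝ} (hc : 1 ≤ c) :
    μ {ω | c * k ≤ S ω} ≤ ENNReal.ofReal ((c * exp (1 - c)) ^ (k / 2)) := by
  have hc₀ : 0 < c := by linarith
  set t := (1 - c⁻¹) / 2
  have ht₀ : 0 ≤ t := by have := inv_le_one_of_one_le₀ hc; simp only [t]; linarith
  have ht : t < 1 / 2 := by have := inv_pos.2 hc₀; simp only [t]; linarith
  calc μ {ω | c * k ≤ S ω} = ENNReal.ofReal (μ.real {ω | c * k ≤ S ω}) :=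
        (ofReal_measureReal).symm
    _ ≤ ENNReal.ofReal (exp (-t * (c * k)) * mgf S μ t) :=
        ENNReal.ofReal_le_ofReal <| measure_ge_le_exp_mul_mgf _ ht₀ <|
          integrable_exp_mul_of_mgf_eq_chiSq hS ht
    _ = ENNReal.ofReal ((c * exp (1 - c)) ^ (k / 2)) := by
        rw [hS t ht, chiSq_chernoff_bound_eq hc₀]

end Tails

end ProbabilityTheory

theorem chi_square_tail_bounds_general
    {Ω : Type*} [MeasureSpace Ω]
    (m : ℕ) (Z : Fin m → Ω → ℝ)
    (hindep : iIndepFun Z ℙ)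
    (hgauss : ∀ i, Measure.map (Z i) ℙ = gaussianReal 0 1)
    (c₀ c₁ : ℝ) (hc₀ : 0 < c₀) (hc₀' : c₀ < 1) (hc₁ : 1 < c₁) :
    ℙ {ω | (∑ i, Z i ω ^ 2) ≤ c₀ * m} ≤
      ENNReal.ofReal ((c₀ * Real.exp (1 - c₀)) ^ ((m : ℝ) / 2)) ∧
    ℙ {ω | c₁ * m ≤ (∑ i, Z i ω ^ 2)} ≤
      ENNReal.ofReal ((c₁ * Real.exp (1 - c₁)) ^ ((m : ℝ) / 2)) := by
  have := hindep.isProbabilityMeasure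
  have hmgf : ∀ t < 1 / 2, mgf (fun ω ↦ ∑ i, Z i ω ^ 2) ℙ t = (1 - 2 * t) ^ (-(m : ℝ) / 2) :=
    fun t ht ↦ by
      simpa using hindep.mgf_sum_sq_gaussianReal hgauss one_ne_zero (by push_cast; linarith)
  exact ⟨measure_le_le_of_mgf_eq_chiSq hmgf hc₀ hc₀'.le,
    measure_ge_le_of_mgf_eq_chiSq hmgf hc₁.le⟩

/-- Chi-square tail bounds: if `Z₁, …, Z_m` are i.i.d. standard
Gaussians and `Z = Σ Zᵢ²`, then `P[Z ≤ c₀ m] ≤ (c₀ e^{1−c₀})^{m/2}` for `0 < c₀ < 1`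
and `P[Z ≥ c₁ m] ≤ (c₁ e^{1−c₁})^{m/2}` for `c₁ > 1`. -/
theorem chi_square_tail_bounds
    {Ω : Type*} [MeasureSpace Ω] (hprob : IsProbabilityMeasure (ℙ : Measure Ω))
    (m : ℕ) (Z : Fin m → Ω → ℝ)
    (hmeas : ∀ i, Measurable (Z i))
    (hindep : iIndepFun Z ℙ)
    (hgauss : ∀ i, Measure.map (Z i) ℙ = gaussianReal 0 1)
    (c₀ c₁ : ℝ) (hc₀ : 0 < c₀) (hc₀' : c₀ < 1) (hc₁ : 1 < c₁) :
    ℙ {ω | (∑ i, Z i ω ^ 2) ≤ c₀ * m} ≤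
      ENNReal.ofReal ((c₀ * Real.exp (1 - c₀)) ^ ((m : ℝ) / 2)) ∧
    ℙ {ω | c₁ * m ≤ (∑ i, Z i ω ^ 2)} ≤
      ENNReal.ofReal ((c₁ * Real.exp (1 - c₁)) ^ ((m : ℝ) / 2)) :=
  chi_square_tail_bounds_general m Z hindep hgauss c₀ c₁ hc₀ hc₀' hc₁
end
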